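/- arXiv:2110.03280 — 7 statements merged into one kernel-verified Lean document; each statement's English description precedes it below -/
import Mathlib

section
/- Let 𝔤 be a real Lie algebra isomorphic to 𝔥₈. Then every LCSKT structure (J,g) on 𝔤 is trivial, i.e. its Bismut torsion 3-form satisfies dH = 0. -/
open Module

section GeneralDefs

variable {L : Type*} [LieRing L] [LieAlgebra ℝ L]

/-- A complex structure on a real Lie algebra: `J² = -id` together with the
integrability condition `[JX,JY] − J[JX,Y] − J[X,JY] − [X,Y] = 0`. -/
def IsComplexStructure (J : L →ₗ[ℝ] L) : Prop :=
  (∀ x : L, J (J x) = -x) ∧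
  (∀ x y : L, ⁅J x, J y⁆ - J ⁅J x, y⁆ - J ⁅x, J y⁆ - ⁅x, y⁆ = 0)

/-- An inner product compatible with `J`: symmetric, positive definite and
`J`-invariant bilinear form. -/
def IsCompatibleMetric (J : L →ₗ[ℝ] L) (g : L →ₗ[ℝ] L →ₗ[ℝ] ℝ) : Prop :=
  (∀ x y : L, g x y = g y x) ∧
  (∀ x : L, x ≠ 0 → 0 < g x x) ∧
  (∀ x y : L, g (J x) (J y) = g x y)

/-- A Hermitian structure `(J,g)`. -/
def IsHermitianStructure (J : L →ₗ[ℝ] L) (g : L →ₗ[ℝ] L →ₗ[ℝ] ℝ) : Prop :=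
  IsComplexStructure J ∧ IsCompatibleMetric J g

/-- The Bismut torsion 3-form
`H(X,Y,Z) = −g([JX,JY],Z) − g([JY,JZ],X) − g([JZ,JX],Y)`. -/
def bismutH (J : L →ₗ[ℝ] L) (g : L →ₗ[ℝ] L →ₗ[ℝ] ℝ) (X Y Z : L) : ℝ :=
  -(g ⁅J X, J Y⁆ Z) - g ⁅J Y, J Z⁆ X - g ⁅J Z, J X⁆ Y

/-- The Chevalley–Eilenberg differential of a (alternating) 3-form. -/
def dThree (H : L → L → L → ℝ) (W X Y Z : L) : ℝ :=
  -(H ⁅W, X⁆ Y Z) + H ⁅W, Y⁆ X Z - H ⁅W, Z⁆ X Y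
    - H ⁅X, Y⁆ W Z + H ⁅X, Z⁆ W Y - H ⁅Y, Z⁆ W X

/-- The wedge product of a 1-form with a 3-form. -/
def wedgeOneThree (α : Module.Dual ℝ L) (H : L → L → L → ℝ) (W X Y Z : L) : ℝ :=
  α W * H X Y Z - α X * H W Y Z + α Y * H W X Z - α Z * H W X Y

/-- A 1-form is closed iff `dα(X,Y) = −α([X,Y]) = 0` for all `X,Y`. -/
def IsClosedOneForm (α : Module.Dual ℝ L) : Prop :=
  ∀ X Y : L, α ⁅X, Y⁆ = 0

/-- The Hermitian structure `(J,g)` is LCSKT: there is a nonzero closed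
1-form `α` with `dH = α ∧ H`. -/
def IsLCSKT (J : L →ₗ[ℝ] L) (g : L →ₗ[ℝ] L →ₗ[ℝ] ℝ) : Prop :=
  ∃ α : Module.Dual ℝ L, α ≠ 0 ∧ IsClosedOneForm α ∧
    ∀ W X Y Z : L,
      dThree (bismutH J g) W X Y Z = wedgeOneThree α (bismutH J g) W X Y Z

end GeneralDefs

/-- `L` is isomorphic to `𝔥₈`: it has a basis `e₀,…,e₅` whose only nonzero
bracket (among pairs `i < j`) is `[e₀,e₁] = e₅`. -/
def IsH8 (L : Type*) [LieRing L] [LieAlgebra ℝ L] : Prop :=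
  ∃ e : Basis (Fin 6) ℝ L,
    ⁅e 0, e 1⁆ = e 5 ∧
    ∀ i j : Fin 6, i < j → ¬(i = 0 ∧ j = 1) → ⁅e i, e j⁆ = 0

/-- `L` is isomorphic to `𝔥₁₆`: it has a basis `e₀,…,e₅` whose only nonzero
brackets (among pairs `i < j`) are `[e₀,e₁] = e₃`, `[e₀,e₃] = e₄`,
`[e₁,e₃] = e₅`. -/
def IsH16 (L : Type*) [LieRing L] [LieAlgebra ℝ L] : Prop :=
  ∃ e : Basis (Fin 6) ℝ L,
    ⁅e 0, e 1⁆ = e 3 ∧ ⁅e 0, e 3⁆ = e 4 ∧ ⁅e 1, e 3⁆ = e 5 ∧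
    ∀ i j : Fin 6, i < j →
      ¬(i = 0 ∧ j = 1) → ¬(i = 0 ∧ j = 3) → ¬(i = 1 ∧ j = 3) → ⁅e i, e j⁆ = 0


section AuxH8

variable {L : Type*} [LieRing L] [LieAlgebra ℝ L]

omit [LieAlgebra ℝ L] in
lemma sum_lie' {ι : Type*} (s : Finset ι) (f : ι → L) (y : L) :
    ⁅∑ i ∈ s, f i, y⁆ = ∑ i ∈ s, ⁅f i, y⁆ := by
  induction s using Finset.cons_induction with
  | empty => simp
  | cons a s ha ih => simp [Finset.sum_cons, add_lie, ih]

omit [LieAlgebra ℝ L] in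
lemma lie_sum' {ι : Type*} (s : Finset ι) (f : ι → L) (y : L) :
    ⁅y, ∑ i ∈ s, f i⁆ = ∑ i ∈ s, ⁅y, f i⁆ := by
  induction s using Finset.cons_induction with
  | empty => simp
  | cons a s ha ih => simp [Finset.sum_cons, lie_add, ih]

lemma h8_bracket (e : Basis (Fin 6) ℝ L)
    (h01 : ⁅e 0, e 1⁆ = e 5)
    (hzero : ∀ i j : Fin 6, i < j → ¬(i = 0 ∧ j = 1) → ⁅e i, e j⁆ = 0)
    (x y : L) :
    ⁅x, y⁆ = (e.coord 0 x * e.coord 1 y - e.coord 1 x * e.coord 0 y) • e 5 := by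
  have hz : ∀ i j : Fin 6, ¬(i = 0 ∧ j = 1) → ¬(i = 1 ∧ j = 0) → ⁅e i, e j⁆ = 0 := by
    intro i j h1 h2
    rcases lt_trichotomy i j with h | h | h
    · exact hzero i j h h1
    · rw [h]; exact lie_self _
    · rw [← lie_skew, hzero j i h (fun hh => h2 ⟨hh.2, hh.1⟩), neg_zero]
  have h10 : ⁅e 1, e 0⁆ = -e 5 := by rw [← lie_skew, h01]
  have hc : ∀ k l : Fin 6, e.coord k (e l) = if l = k then 1 else 0 := by
    intro k l; simp [Basis.coord_apply, Basis.repr_self, Finsupp.single_apply]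
  have hbasis : ∀ i j : Fin 6,
      ⁅e i, e j⁆ = (e.coord 0 (e i) * e.coord 1 (e j)
        - e.coord 1 (e i) * e.coord 0 (e j)) • e 5 := by
    intro i j
    by_cases h1 : i = 0 ∧ j = 1
    · obtain ⟨hi, hj⟩ := h1; subst hi; subst hj
      rw [h01]; simp [hc]
    · by_cases h2 : i = 1 ∧ j = 0
      · obtain ⟨hi, hj⟩ := h2; subst hi; subst hj
        rw [h10]; simp [hc]
      · rw [hz i j h1 h2]
        have hs : (e.coord 0 (e i) * e.coord 1 (e j)
            - e.coord 1 (e i) * e.coord 0 (e j)) = 0 := by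
          simp only [hc]
          split_ifs <;> norm_num <;> tauto
        rw [hs, zero_smul]
  conv_lhs => rw [← e.sum_repr x, ← e.sum_repr y]
  rw [sum_lie']
  simp only [lie_sum', smul_lie, lie_smul, hbasis, smul_smul]
  simp [Fin.sum_univ_six, hc, Basis.coord_apply]
  module

end AuxH8

/-- On a Lie algebra isomorphic to `𝔥₈`, every LCSKT
structure is trivial, i.e. `dH = 0`. -/
theorem h8_lcskt_trivial
    (L : Type*) [LieRing L] [LieAlgebra ℝ L] (h : IsH8 L)
    (J : L →ₗ[ℝ] L) (g : L →ₗ[ℝ] L →ₗ[ℝ] ℝ)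
    (hherm : IsHermitianStructure J g) (hlcskt : IsLCSKT J g) :
    ∀ W X Y Z : L, dThree (bismutH J g) W X Y Z = 0 := by
  obtain ⟨e, h01, hzero⟩ := h
  obtain ⟨⟨hJ2, hint⟩, -⟩ := hherm
  clear hlcskt
  set ω : L → L → ℝ :=
    fun x y => e.coord 0 x * e.coord 1 y - e.coord 1 x * e.coord 0 y with hωdef
  have hbr : ∀ x y : L, ⁅x, y⁆ = ω x y • e 5 := h8_bracket e h01 hzero
  have he5 : e 5 ≠ 0 := e.ne_zero 5
  -- `J e₅` is not a real multiple of `e₅` since `J² = -1`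
  have hnoeig : ∀ t : ℝ, J (e 5) ≠ t • e 5 := by
    intro t ht
    have h2 := hJ2 (e 5)
    rw [ht, map_smul, ht, smul_smul] at h2
    have h3 : (t * t + 1) • e 5 = 0 := by
      rw [add_smul, one_smul, h2, neg_add_cancel]
    rcases smul_eq_zero.mp h3 with h4 | h4
    · nlinarith [sq_nonneg t]
    · exact he5 h4
  have hind : ∀ a b : ℝ, a • e 5 + b • J (e 5) = 0 → a = 0 := by
    intro a b hab
    by_cases hb : b = 0
    · rw [hb, zero_smul, add_zero] at hab
      rcases smul_eq_zero.mp hab with h | h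
      · exact h
      · exact absurd h he5
    · exfalso
      apply hnoeig (b⁻¹ * (-a))
      have hba : b • J (e 5) = (-a) • e 5 := by
        rw [neg_smul]; linear_combination (norm := module) hab
      calc J (e 5) = (b⁻¹ * b) • J (e 5) := by rw [inv_mul_cancel₀ hb, one_smul]
        _ = b⁻¹ • ((-a) • e 5) := by rw [mul_smul, hba]
        _ = (b⁻¹ * (-a)) • e 5 := by rw [smul_smul]
  have hc5 : e.coord 0 (e 5) = 0 ∧ e.coord 1 (e 5) = 0 := by
    constructor <;> simp [Basis.coord_apply, Basis.repr_self, Finsupp.single_apply]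
  -- `ω` is `J`-invariant, by integrability
  have hη : ∀ x y : L, ω (J x) (J y) = ω x y := by
    intro x y
    have hxy := hint x y
    rw [hbr (J x) (J y), hbr (J x) y, hbr x (J y), hbr x y, map_smul, map_smul] at hxy
    have h' : (ω (J x) (J y) - ω x y) • e 5
        + (-(ω (J x) y) - ω x (J y)) • J (e 5) = 0 := by
      linear_combination (norm := module) hxy
    have := hind _ _ h'
    linarith [this]
  -- `ω` vanishes whenever one slot is a bracket
  have hωbr : ∀ a b c : L, ω ⁅a, b⁆ c = 0 := by
    intro a b c
    rw [hbr a b]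
    simp [hωdef, map_smul, hc5.1, hc5.2]
  have hωbr' : ∀ a b c : L, ω c ⁅a, b⁆ = 0 := by
    intro a b c
    rw [hbr a b]
    simp [hωdef, map_smul, hc5.1, hc5.2]
  -- formula for the Bismut torsion form
  have hH : ∀ X Y Z : L, bismutH J g X Y Z =
      -(ω X Y * g (e 5) Z) - ω Y Z * g (e 5) X - ω Z X * g (e 5) Y := by
    intro X Y Z
    unfold bismutH
    rw [hbr (J X) (J Y), hbr (J Y) (J Z), hbr (J Z) (J X), hη, hη, hη]
    simp [map_smul, LinearMap.smul_apply, smul_eq_mul]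
  -- the Bismut form evaluated on a bracket
  have hHbr : ∀ A B C D : L, bismutH J g ⁅A, B⁆ C D
      = -(ω C D * (ω A B * g (e 5) (e 5))) := by
    intro A B C D
    rw [hH, hωbr, hωbr']
    rw [hbr A B, map_smul, smul_eq_mul]
    ring
  intro W X Y Z
  unfold dThree
  rw [hHbr W X Y Z, hHbr W Y X Z, hHbr W Z X Y, hHbr X Y W Z, hHbr X Z W Y, hHbr Y Z W X]
  simp only [hωdef]
  ring
end

section
/- The Lie algebra 𝔥₁₆ is 3-step nilpotent (its lower central series satisfies 𝔤¹ = [𝔤,𝔤] ≠ 0, 𝔤² = [𝔤,𝔤¹] ≠ 0, 𝔤³ = [𝔤,𝔤²] = 0) and it admits a non-trivial LCSKT structure, i.e. a Hermitian structure (J,g) together with a nonzero closed 1-form α such that dH = α ∧ H and dH ≠ 0. -/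
open Module

section MyAuxH16

variable {L : Type*} [LieRing L] [LieAlgebra ℝ L]

theorem h16_key (e : Basis (Fin 6) ℝ L)
    (h01 : ⁅e 0, e 1⁆ = e 3) (h03 : ⁅e 0, e 3⁆ = e 4) (h13 : ⁅e 1, e 3⁆ = e 5)
    (hz : ∀ i j : Fin 6, i < j →
      ¬(i = 0 ∧ j = 1) → ¬(i = 0 ∧ j = 3) → ¬(i = 1 ∧ j = 3) → ⁅e i, e j⁆ = 0)
    (x y : L) :
    ⁅x, y⁆ = (e.repr x 0 * e.repr y 1 - e.repr x 1 * e.repr y 0) • e 3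
           + (e.repr x 0 * e.repr y 3 - e.repr x 3 * e.repr y 0) • e 4
           + (e.repr x 1 * e.repr y 3 - e.repr x 3 * e.repr y 1) • e 5 := by
  have t00 : ⁅e 0, e 0⁆ = 0 := lie_self _
  have t01 : ⁅e 0, e 1⁆ = e 3 := h01
  have t02 : ⁅e 0, e 2⁆ = 0 := hz 0 2 (by decide) (by decide) (by decide) (by decide)
  have t03 : ⁅e 0, e 3⁆ = e 4 := h03
  have t04 : ⁅e 0, e 4⁆ = 0 := hz 0 4 (by decide) (by decide) (by decide) (by decide)
  have t05 : ⁅e 0, e 5⁆ = 0 := hz 0 5 (by decide) (by decide) (by decide) (by decide)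
  have t10 : ⁅e 1, e 0⁆ = -(e 3) := by rw [← t01, ← lie_skew]
  have t11 : ⁅e 1, e 1⁆ = 0 := lie_self _
  have t12 : ⁅e 1, e 2⁆ = 0 := hz 1 2 (by decide) (by decide) (by decide) (by decide)
  have t13 : ⁅e 1, e 3⁆ = e 5 := h13
  have t14 : ⁅e 1, e 4⁆ = 0 := hz 1 4 (by decide) (by decide) (by decide) (by decide)
  have t15 : ⁅e 1, e 5⁆ = 0 := hz 1 5 (by decide) (by decide) (by decide) (by decide)
  have t20 : ⁅e 2, e 0⁆ = 0 := by rw [← lie_skew, t02, neg_zero]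
  have t21 : ⁅e 2, e 1⁆ = 0 := by rw [← lie_skew, t12, neg_zero]
  have t22 : ⁅e 2, e 2⁆ = 0 := lie_self _
  have t23 : ⁅e 2, e 3⁆ = 0 := hz 2 3 (by decide) (by decide) (by decide) (by decide)
  have t24 : ⁅e 2, e 4⁆ = 0 := hz 2 4 (by decide) (by decide) (by decide) (by decide)
  have t25 : ⁅e 2, e 5⁆ = 0 := hz 2 5 (by decide) (by decide) (by decide) (by decide)
  have t30 : ⁅e 3, e 0⁆ = -(e 4) := by rw [← t03, ← lie_skew]
  have t31 : ⁅e 3, e 1⁆ = -(e 5) := by rw [← t13, ← lie_skew]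
  have t32 : ⁅e 3, e 2⁆ = 0 := by rw [← lie_skew, t23, neg_zero]
  have t33 : ⁅e 3, e 3⁆ = 0 := lie_self _
  have t34 : ⁅e 3, e 4⁆ = 0 := hz 3 4 (by decide) (by decide) (by decide) (by decide)
  have t35 : ⁅e 3, e 5⁆ = 0 := hz 3 5 (by decide) (by decide) (by decide) (by decide)
  have t40 : ⁅e 4, e 0⁆ = 0 := by rw [← lie_skew, t04, neg_zero]
  have t41 : ⁅e 4, e 1⁆ = 0 := by rw [← lie_skew, t14, neg_zero]
  have t42 : ⁅e 4, e 2⁆ = 0 := by rw [← lie_skew, t24, neg_zero]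
  have t43 : ⁅e 4, e 3⁆ = 0 := by rw [← lie_skew, t34, neg_zero]
  have t44 : ⁅e 4, e 4⁆ = 0 := lie_self _
  have t45 : ⁅e 4, e 5⁆ = 0 := hz 4 5 (by decide) (by decide) (by decide) (by decide)
  have t50 : ⁅e 5, e 0⁆ = 0 := by rw [← lie_skew, t05, neg_zero]
  have t51 : ⁅e 5, e 1⁆ = 0 := by rw [← lie_skew, t15, neg_zero]
  have t52 : ⁅e 5, e 2⁆ = 0 := by rw [← lie_skew, t25, neg_zero]
  have t53 : ⁅e 5, e 3⁆ = 0 := by rw [← lie_skew, t35, neg_zero]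
  have t54 : ⁅e 5, e 4⁆ = 0 := by rw [← lie_skew, t45, neg_zero]
  have t55 : ⁅e 5, e 5⁆ = 0 := lie_self _

  conv_lhs => rw [← e.sum_repr x, ← e.sum_repr y]
  simp only [Fin.sum_univ_six, add_lie, lie_add, smul_lie, lie_smul,
    t00, t01, t02, t03, t04, t05, t10, t11, t12, t13, t14, t15, t20, t21, t22, t23, t24, t25, t30, t31, t32, t33, t34, t35, t40, t41, t42, t43, t44, t45, t50, t51, t52, t53, t54, t55,
    smul_zero, add_zero, zero_add, smul_neg, smul_smul]
  module

theorem h16_cB0 (e : Basis (Fin 6) ℝ L)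
    (h01 : ⁅e 0, e 1⁆ = e 3) (h03 : ⁅e 0, e 3⁆ = e 4) (h13 : ⁅e 1, e 3⁆ = e 5)
    (hz : ∀ i j : Fin 6, i < j →
      ¬(i = 0 ∧ j = 1) → ¬(i = 0 ∧ j = 3) → ¬(i = 1 ∧ j = 3) → ⁅e i, e j⁆ = 0)
    (x y : L) : e.repr ⁅x, y⁆ 0 = 0 := by
  rw [h16_key e h01 h03 h13 hz]
  simp [Finsupp.add_apply, Finsupp.smul_apply, e.repr_self, Finsupp.single_apply]

theorem h16_cB1 (e : Basis (Fin 6) ℝ L)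
    (h01 : ⁅e 0, e 1⁆ = e 3) (h03 : ⁅e 0, e 3⁆ = e 4) (h13 : ⁅e 1, e 3⁆ = e 5)
    (hz : ∀ i j : Fin 6, i < j →
      ¬(i = 0 ∧ j = 1) → ¬(i = 0 ∧ j = 3) → ¬(i = 1 ∧ j = 3) → ⁅e i, e j⁆ = 0)
    (x y : L) : e.repr ⁅x, y⁆ 1 = 0 := by
  rw [h16_key e h01 h03 h13 hz]
  simp [Finsupp.add_apply, Finsupp.smul_apply, e.repr_self, Finsupp.single_apply]

theorem h16_cB2 (e : Basis (Fin 6) ℝ L)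
    (h01 : ⁅e 0, e 1⁆ = e 3) (h03 : ⁅e 0, e 3⁆ = e 4) (h13 : ⁅e 1, e 3⁆ = e 5)
    (hz : ∀ i j : Fin 6, i < j →
      ¬(i = 0 ∧ j = 1) → ¬(i = 0 ∧ j = 3) → ¬(i = 1 ∧ j = 3) → ⁅e i, e j⁆ = 0)
    (x y : L) : e.repr ⁅x, y⁆ 2 = 0 := by
  rw [h16_key e h01 h03 h13 hz]
  simp [Finsupp.add_apply, Finsupp.smul_apply, e.repr_self, Finsupp.single_apply]

theorem h16_cB3 (e : Basis (Fin 6) ℝ L)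
    (h01 : ⁅e 0, e 1⁆ = e 3) (h03 : ⁅e 0, e 3⁆ = e 4) (h13 : ⁅e 1, e 3⁆ = e 5)
    (hz : ∀ i j : Fin 6, i < j →
      ¬(i = 0 ∧ j = 1) → ¬(i = 0 ∧ j = 3) → ¬(i = 1 ∧ j = 3) → ⁅e i, e j⁆ = 0)
    (x y : L) : e.repr ⁅x, y⁆ 3 = e.repr x 0 * e.repr y 1 - e.repr x 1 * e.repr y 0 := by
  rw [h16_key e h01 h03 h13 hz]
  simp [Finsupp.add_apply, Finsupp.smul_apply, e.repr_self, Finsupp.single_apply]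

theorem h16_cB4 (e : Basis (Fin 6) ℝ L)
    (h01 : ⁅e 0, e 1⁆ = e 3) (h03 : ⁅e 0, e 3⁆ = e 4) (h13 : ⁅e 1, e 3⁆ = e 5)
    (hz : ∀ i j : Fin 6, i < j →
      ¬(i = 0 ∧ j = 1) → ¬(i = 0 ∧ j = 3) → ¬(i = 1 ∧ j = 3) → ⁅e i, e j⁆ = 0)
    (x y : L) : e.repr ⁅x, y⁆ 4 = e.repr x 0 * e.repr y 3 - e.repr x 3 * e.repr y 0 := by
  rw [h16_key e h01 h03 h13 hz]
  simp [Finsupp.add_apply, Finsupp.smul_apply, e.repr_self, Finsupp.single_apply]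

theorem h16_cB5 (e : Basis (Fin 6) ℝ L)
    (h01 : ⁅e 0, e 1⁆ = e 3) (h03 : ⁅e 0, e 3⁆ = e 4) (h13 : ⁅e 1, e 3⁆ = e 5)
    (hz : ∀ i j : Fin 6, i < j →
      ¬(i = 0 ∧ j = 1) → ¬(i = 0 ∧ j = 3) → ¬(i = 1 ∧ j = 3) → ⁅e i, e j⁆ = 0)
    (x y : L) : e.repr ⁅x, y⁆ 5 = e.repr x 1 * e.repr y 3 - e.repr x 3 * e.repr y 1 := by
  rw [h16_key e h01 h03 h13 hz]
  simp [Finsupp.add_apply, Finsupp.smul_apply, e.repr_self, Finsupp.single_apply]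

/-- The complex structure on `𝔥₁₆`. -/
noncomputable def h16J (e : Basis (Fin 6) ℝ L) : L →ₗ[ℝ] L :=
  e.constr ℝ ![e 1, -e 0, -e 3, e 2, e 5, -e 4]

theorem h16J_repr (e : Basis (Fin 6) ℝ L) (x : L) :
    e.repr (h16J e x) 0 = -(e.repr x 1) ∧ e.repr (h16J e x) 1 = e.repr x 0 ∧
    e.repr (h16J e x) 2 = e.repr x 3 ∧ e.repr (h16J e x) 3 = -(e.repr x 2) ∧
    e.repr (h16J e x) 4 = -(e.repr x 5) ∧ e.repr (h16J e x) 5 = e.repr x 4 := by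
  have v0 : (![e 1, -e 0, -e 3, e 2, e 5, -e 4] : Fin 6 → L) 0 = e 1 := rfl
  have v1 : (![e 1, -e 0, -e 3, e 2, e 5, -e 4] : Fin 6 → L) 1 = -e 0 := rfl
  have v2 : (![e 1, -e 0, -e 3, e 2, e 5, -e 4] : Fin 6 → L) 2 = -e 3 := rfl
  have v3 : (![e 1, -e 0, -e 3, e 2, e 5, -e 4] : Fin 6 → L) 3 = e 2 := rfl
  have v4 : (![e 1, -e 0, -e 3, e 2, e 5, -e 4] : Fin 6 → L) 4 = e 5 := rfl
  have v5 : (![e 1, -e 0, -e 3, e 2, e 5, -e 4] : Fin 6 → L) 5 = -e 4 := rfl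
  refine ⟨?_, ?_, ?_, ?_, ?_, ?_⟩ <;>
  simp [h16J, Basis.constr_apply_fintype, Basis.equivFun_apply, Fin.sum_univ_six,
    v0, v1, v2, v3, v4, v5, Finsupp.add_apply, Finsupp.smul_apply, e.repr_self,
    Finsupp.single_apply, Finsupp.neg_apply]

/-- The metric making the given basis orthonormal. -/
noncomputable def h16g (e : Basis (Fin 6) ℝ L) : L →ₗ[ℝ] L →ₗ[ℝ] ℝ :=
  LinearMap.mk₂ ℝ (fun x y => ∑ i, e.repr x i * e.repr y i)
    (fun m₁ m₂ n => by simp [Finsupp.add_apply, add_mul, Finset.sum_add_distrib])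
    (fun c m n => by simp [Finsupp.smul_apply, smul_eq_mul, Finset.mul_sum, mul_assoc])
    (fun m n₁ n₂ => by simp [Finsupp.add_apply, mul_add, Finset.sum_add_distrib])
    (fun c m n => by simp [Finsupp.smul_apply, smul_eq_mul, Finset.mul_sum]; congr 1; ext i; ring)

theorem h16g_apply (e : Basis (Fin 6) ℝ L) (x y : L) :
    h16g e x y = ∑ i, e.repr x i * e.repr y i := rfl

end MyAuxH16

/-- The Lie algebra `𝔥₁₆` is 3-step nilpotent and admits a
non-trivial LCSKT structure. -/
theorem h16_threeStep_and_nontrivial_lcskt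
    (L : Type*) [LieRing L] [LieAlgebra ℝ L] (h : IsH16 L) :
    (LieModule.lowerCentralSeries ℝ L L 1 ≠ ⊥ ∧
     LieModule.lowerCentralSeries ℝ L L 2 ≠ ⊥ ∧
     LieModule.lowerCentralSeries ℝ L L 3 = ⊥) ∧
    ∃ (J : L →ₗ[ℝ] L) (g : L →ₗ[ℝ] L →ₗ[ℝ] ℝ),
      IsHermitianStructure J g ∧
      ∃ α : Module.Dual ℝ L, α ≠ 0 ∧ IsClosedOneForm α ∧
        (∀ W X Y Z : L,
          dThree (bismutH J g) W X Y Z = wedgeOneThree α (bismutH J g) W X Y Z) ∧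
        (∃ W X Y Z : L, dThree (bismutH J g) W X Y Z ≠ 0) := by
  obtain ⟨e, h01, h03, h13, hz⟩ := h
  have cB0 := h16_cB0 e h01 h03 h13 hz
  have cB1 := h16_cB1 e h01 h03 h13 hz
  have cB2 := h16_cB2 e h01 h03 h13 hz
  have cB3 := h16_cB3 e h01 h03 h13 hz
  have cB4 := h16_cB4 e h01 h03 h13 hz
  have cB5 := h16_cB5 e h01 h03 h13 hz
  have cJ0 : ∀ x : L, e.repr (h16J e x) 0 = -(e.repr x 1) := fun x => (h16J_repr e x).1
  have cJ1 : ∀ x : L, e.repr (h16J e x) 1 = e.repr x 0 := fun x => (h16J_repr e x).2.1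
  have cJ2 : ∀ x : L, e.repr (h16J e x) 2 = e.repr x 3 := fun x => (h16J_repr e x).2.2.1
  have cJ3 : ∀ x : L, e.repr (h16J e x) 3 = -(e.repr x 2) := fun x => (h16J_repr e x).2.2.2.1
  have cJ4 : ∀ x : L, e.repr (h16J e x) 4 = -(e.repr x 5) := fun x => (h16J_repr e x).2.2.2.2.1
  have cJ5 : ∀ x : L, e.repr (h16J e x) 5 = e.repr x 4 := fun x => (h16J_repr e x).2.2.2.2.2
  constructor
  · -- nilpotency
    refine ⟨?_, ?_, ?_⟩
    · intro hbot
      have he3 : e 3 ∈ LieModule.lowerCentralSeries ℝ L L 1 := by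
        rw [show (1:ℕ) = 0 + 1 from rfl, LieModule.lowerCentralSeries_succ]
        exact h01 ▸ LieSubmodule.lie_mem_lie (LieSubmodule.mem_top _) (LieSubmodule.mem_top _)
      rw [hbot] at he3
      exact e.ne_zero 3 (by simpa using he3)
    · intro hbot
      have he3 : e 3 ∈ LieModule.lowerCentralSeries ℝ L L 1 := by
        rw [show (1:ℕ) = 0 + 1 from rfl, LieModule.lowerCentralSeries_succ]
        exact h01 ▸ LieSubmodule.lie_mem_lie (LieSubmodule.mem_top _) (LieSubmodule.mem_top _)
      have he4 : e 4 ∈ LieModule.lowerCentralSeries ℝ L L 2 := by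
        rw [show (2:ℕ) = 1 + 1 from rfl, LieModule.lowerCentralSeries_succ]
        exact h03 ▸ LieSubmodule.lie_mem_lie (LieSubmodule.mem_top _) he3
      rw [hbot] at he4
      exact e.ne_zero 4 (by simpa using he4)
    · -- lcs 3 = ⊥
      set N1 : LieSubmodule ℝ L L :=
        { carrier := {z : L | e.repr z 0 = 0 ∧ e.repr z 1 = 0}
          add_mem' := fun ha hb => by
            simp only [Set.mem_setOf_eq, map_add, Finsupp.add_apply] at *
            exact ⟨by rw [ha.1, hb.1, add_zero], by rw [ha.2, hb.2, add_zero]⟩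
          zero_mem' := by simp
          smul_mem' := fun c x hx => by
            simp only [Set.mem_setOf_eq, map_smul, Finsupp.smul_apply, smul_eq_mul] at *
            exact ⟨by rw [hx.1, mul_zero], by rw [hx.2, mul_zero]⟩
          lie_mem := fun {x m} hm => ⟨cB0 x m, cB1 x m⟩ }
      set N2 : LieSubmodule ℝ L L :=
        { carrier := {z : L | e.repr z 0 = 0 ∧ e.repr z 1 = 0 ∧ e.repr z 3 = 0}
          add_mem' := fun ha hb => by
            simp only [Set.mem_setOf_eq, map_add, Finsupp.add_apply] at *
            exact ⟨by rw [ha.1, hb.1, add_zero], by rw [ha.2.1, hb.2.1, add_zero],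
              by rw [ha.2.2, hb.2.2, add_zero]⟩
          zero_mem' := by simp
          smul_mem' := fun c x hx => by
            simp only [Set.mem_setOf_eq, map_smul, Finsupp.smul_apply, smul_eq_mul] at *
            exact ⟨by rw [hx.1, mul_zero], by rw [hx.2.1, mul_zero], by rw [hx.2.2, mul_zero]⟩
          lie_mem := fun {x m} hm => by
            refine ⟨cB0 x m, cB1 x m, ?_⟩
            simp [cB3 x m, hm.1, hm.2.1] }
      have hmem1 : ∀ z : L, z ∈ N1 ↔ e.repr z 0 = 0 ∧ e.repr z 1 = 0 := fun z => Iff.rfl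
      have hmem2 : ∀ z : L, z ∈ N2 ↔ e.repr z 0 = 0 ∧ e.repr z 1 = 0 ∧ e.repr z 3 = 0 :=
        fun z => Iff.rfl
      have h1 : LieModule.lowerCentralSeries ℝ L L 1 ≤ N1 := by
        rw [show (1:ℕ) = 0 + 1 from rfl, LieModule.lowerCentralSeries_succ]
        rw [LieSubmodule.lie_le_iff]
        intro x _ m _
        exact ⟨cB0 x m, cB1 x m⟩
      have h2 : LieModule.lowerCentralSeries ℝ L L 2 ≤ N2 := by
        rw [show (2:ℕ) = 1 + 1 from rfl, LieModule.lowerCentralSeries_succ]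
        rw [LieSubmodule.lie_le_iff]
        intro x _ m hm
        have hm' := (hmem1 m).mp (h1 hm)
        refine ⟨cB0 x m, cB1 x m, ?_⟩
        simp [cB3 x m, hm'.1, hm'.2]
      rw [show (3:ℕ) = 2 + 1 from rfl, LieModule.lowerCentralSeries_succ,
        LieSubmodule.lie_eq_bot_iff]
      intro x _ m hm
      have hm' := (hmem2 m).mp (h2 hm)
      rw [e.ext_elem_iff]
      intro i
      fin_cases i <;>
        simp [cB0, cB1, cB2, cB3, cB4, cB5, hm'.1, hm'.2.1, hm'.2.2]
  · -- LCSKT structure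
    refine ⟨h16J e, h16g e, ⟨⟨?_, ?_⟩, ?_, ?_, ?_⟩,
      (-2 : ℝ) • e.coord 2, ?_, ?_, ?_, e 0, e 1, e 2, e 3, ?_⟩
    · -- J² = -1
      intro x
      rw [e.ext_elem_iff]
      intro i
      fin_cases i <;> simp [cJ0, cJ1, cJ2, cJ3, cJ4, cJ5, Finsupp.neg_apply]
    · -- integrability
      intro x y
      rw [e.ext_elem_iff]
      intro i
      fin_cases i <;>
        (simp [map_sub, Finsupp.sub_apply, cB0, cB1, cB2, cB3, cB4, cB5,
          cJ0, cJ1, cJ2, cJ3, cJ4, cJ5]; try ring)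
    · -- symmetry
      intro x y
      simp only [h16g_apply]
      exact Finset.sum_congr rfl fun i _ => mul_comm _ _
    · -- positivity
      intro x hx
      have hr : e.repr x ≠ 0 := fun hc => hx (by
        have := congrArg e.repr.symm hc
        simpa using this)
      obtain ⟨i, hi⟩ := Finsupp.ne_iff.mp hr
      rw [Finsupp.coe_zero, Pi.zero_apply] at hi
      calc (0:ℝ) < e.repr x i * e.repr x i := mul_self_pos.mpr hi
        _ ≤ ∑ j, e.repr x j * e.repr x j :=
          Finset.single_le_sum (f := fun j => e.repr x j * e.repr x j)
            (fun j _ => mul_self_nonneg _) (Finset.mem_univ i)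
    · -- J-invariance
      intro x y
      simp only [h16g_apply, Fin.sum_univ_six, cJ0, cJ1, cJ2, cJ3, cJ4, cJ5]
      ring
    · -- α ≠ 0
      intro hα
      have := LinearMap.congr_fun hα (e 2)
      simp [Basis.coord_apply, e.repr_self] at this
    · -- α closed
      intro x y
      simp [Basis.coord_apply, cB2]
    · -- dH = α ∧ H
      intro W X Y Z
      simp only [dThree, wedgeOneThree, bismutH, h16g_apply, Fin.sum_univ_six,
        LinearMap.smul_apply, Basis.coord_apply, smul_eq_mul,
        cB0, cB1, cB2, cB3, cB4, cB5, cJ0, cJ1, cJ2, cJ3, cJ4, cJ5]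
      ring
    · -- dH ≠ 0
      have r00 : e.repr (e 0) 0 = 1 := by rw [e.repr_self]; exact Finsupp.single_eq_same
      have r01 : e.repr (e 0) 1 = 0 := by rw [e.repr_self]; exact Finsupp.single_eq_of_ne (by decide)
      have r02 : e.repr (e 0) 2 = 0 := by rw [e.repr_self]; exact Finsupp.single_eq_of_ne (by decide)
      have r03 : e.repr (e 0) 3 = 0 := by rw [e.repr_self]; exact Finsupp.single_eq_of_ne (by decide)
      have r04 : e.repr (e 0) 4 = 0 := by rw [e.repr_self]; exact Finsupp.single_eq_of_ne (by decide)
      have r05 : e.repr (e 0) 5 = 0 := by rw [e.repr_self]; exact Finsupp.single_eq_of_ne (by decide)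
      have r10 : e.repr (e 1) 0 = 0 := by rw [e.repr_self]; exact Finsupp.single_eq_of_ne (by decide)
      have r11 : e.repr (e 1) 1 = 1 := by rw [e.repr_self]; exact Finsupp.single_eq_same
      have r12 : e.repr (e 1) 2 = 0 := by rw [e.repr_self]; exact Finsupp.single_eq_of_ne (by decide)
      have r13 : e.repr (e 1) 3 = 0 := by rw [e.repr_self]; exact Finsupp.single_eq_of_ne (by decide)
      have r14 : e.repr (e 1) 4 = 0 := by rw [e.repr_self]; exact Finsupp.single_eq_of_ne (by decide)
      have r15 : e.repr (e 1) 5 = 0 := by rw [e.repr_self]; exact Finsupp.single_eq_of_ne (by decide)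
      have r20 : e.repr (e 2) 0 = 0 := by rw [e.repr_self]; exact Finsupp.single_eq_of_ne (by decide)
      have r21 : e.repr (e 2) 1 = 0 := by rw [e.repr_self]; exact Finsupp.single_eq_of_ne (by decide)
      have r22 : e.repr (e 2) 2 = 1 := by rw [e.repr_self]; exact Finsupp.single_eq_same
      have r23 : e.repr (e 2) 3 = 0 := by rw [e.repr_self]; exact Finsupp.single_eq_of_ne (by decide)
      have r24 : e.repr (e 2) 4 = 0 := by rw [e.repr_self]; exact Finsupp.single_eq_of_ne (by decide)
      have r25 : e.repr (e 2) 5 = 0 := by rw [e.repr_self]; exact Finsupp.single_eq_of_ne (by decide)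
      have r30 : e.repr (e 3) 0 = 0 := by rw [e.repr_self]; exact Finsupp.single_eq_of_ne (by decide)
      have r31 : e.repr (e 3) 1 = 0 := by rw [e.repr_self]; exact Finsupp.single_eq_of_ne (by decide)
      have r32 : e.repr (e 3) 2 = 0 := by rw [e.repr_self]; exact Finsupp.single_eq_of_ne (by decide)
      have r33 : e.repr (e 3) 3 = 1 := by rw [e.repr_self]; exact Finsupp.single_eq_same
      have r34 : e.repr (e 3) 4 = 0 := by rw [e.repr_self]; exact Finsupp.single_eq_of_ne (by decide)
      have r35 : e.repr (e 3) 5 = 0 := by rw [e.repr_self]; exact Finsupp.single_eq_of_ne (by decide)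
      simp only [dThree, bismutH, h16g_apply, Fin.sum_univ_six,
        cB0, cB1, cB2, cB3, cB4, cB5, cJ0, cJ1, cJ2, cJ3, cJ4, cJ5,
        r00, r01, r02, r03, r04, r05, r10, r11, r12, r13, r14, r15, r20, r21, r22, r23, r24, r25, r30, r31, r32, r33, r34, r35]
      norm_num
end

section
/- Let 𝔤 be a real Lie algebra isomorphic to 𝔥₁₆. Then every LCSKT structure (J,g) on 𝔤 is non-trivial, i.e. its Bismut torsion 3-form satisfies dH ≠ 0. -/
open Module

section AuxH16

variable {L : Type*} [LieRing L] [LieAlgebra ℝ L]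

set_option maxHeartbeats 1000000 in
/-- The bracket of `𝔥₁₆` in coordinates. -/
theorem h16_brk (e : Basis (Fin 6) ℝ L)
    (h01 : ⁅e 0, e 1⁆ = e 3) (h03 : ⁅e 0, e 3⁆ = e 4) (h13 : ⁅e 1, e 3⁆ = e 5)
    (hz : ∀ i j : Fin 6, i < j → ¬(i = 0 ∧ j = 1) → ¬(i = 0 ∧ j = 3) → ¬(i = 1 ∧ j = 3) →
      ⁅e i, e j⁆ = 0) :
    ∀ V W : L, ⁅V, W⁆ =
      (e.repr V 0 * e.repr W 1 - e.repr V 1 * e.repr W 0) • e 3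
      + (e.repr V 0 * e.repr W 3 - e.repr V 3 * e.repr W 0) • e 4
      + (e.repr V 1 * e.repr W 3 - e.repr V 3 * e.repr W 1) • e 5 := by
  have z02 : ⁅e 0, e 2⁆ = 0 := hz 0 2 (by decide) (by decide) (by decide) (by decide)
  have z04 : ⁅e 0, e 4⁆ = 0 := hz 0 4 (by decide) (by decide) (by decide) (by decide)
  have z05 : ⁅e 0, e 5⁆ = 0 := hz 0 5 (by decide) (by decide) (by decide) (by decide)
  have z12 : ⁅e 1, e 2⁆ = 0 := hz 1 2 (by decide) (by decide) (by decide) (by decide)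
  have z14 : ⁅e 1, e 4⁆ = 0 := hz 1 4 (by decide) (by decide) (by decide) (by decide)
  have z15 : ⁅e 1, e 5⁆ = 0 := hz 1 5 (by decide) (by decide) (by decide) (by decide)
  have z23 : ⁅e 2, e 3⁆ = 0 := hz 2 3 (by decide) (by decide) (by decide) (by decide)
  have z24 : ⁅e 2, e 4⁆ = 0 := hz 2 4 (by decide) (by decide) (by decide) (by decide)
  have z25 : ⁅e 2, e 5⁆ = 0 := hz 2 5 (by decide) (by decide) (by decide) (by decide)
  have z34 : ⁅e 3, e 4⁆ = 0 := hz 3 4 (by decide) (by decide) (by decide) (by decide)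
  have z35 : ⁅e 3, e 5⁆ = 0 := hz 3 5 (by decide) (by decide) (by decide) (by decide)
  have z45 : ⁅e 4, e 5⁆ = 0 := hz 4 5 (by decide) (by decide) (by decide) (by decide)
  have n10 : ⁅e 1, e 0⁆ = -e 3 := by rw [← lie_skew, h01]
  have n30 : ⁅e 3, e 0⁆ = -e 4 := by rw [← lie_skew, h03]
  have n31 : ⁅e 3, e 1⁆ = -e 5 := by rw [← lie_skew, h13]
  have z20 : ⁅e 2, e 0⁆ = 0 := by rw [← lie_skew, z02, neg_zero]
  have z40 : ⁅e 4, e 0⁆ = 0 := by rw [← lie_skew, z04, neg_zero]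
  have z50 : ⁅e 5, e 0⁆ = 0 := by rw [← lie_skew, z05, neg_zero]
  have z21 : ⁅e 2, e 1⁆ = 0 := by rw [← lie_skew, z12, neg_zero]
  have z41 : ⁅e 4, e 1⁆ = 0 := by rw [← lie_skew, z14, neg_zero]
  have z51 : ⁅e 5, e 1⁆ = 0 := by rw [← lie_skew, z15, neg_zero]
  have z32 : ⁅e 3, e 2⁆ = 0 := by rw [← lie_skew, z23, neg_zero]
  have z42 : ⁅e 4, e 2⁆ = 0 := by rw [← lie_skew, z24, neg_zero]
  have z52 : ⁅e 5, e 2⁆ = 0 := by rw [← lie_skew, z25, neg_zero]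
  have z43 : ⁅e 4, e 3⁆ = 0 := by rw [← lie_skew, z34, neg_zero]
  have z53 : ⁅e 5, e 3⁆ = 0 := by rw [← lie_skew, z35, neg_zero]
  have z54 : ⁅e 5, e 4⁆ = 0 := by rw [← lie_skew, z45, neg_zero]
  intro V W
  conv_lhs => rw [← e.sum_repr V, ← e.sum_repr W]
  rw [Fin.sum_univ_six, Fin.sum_univ_six]
  simp only [add_lie, lie_add, smul_lie, lie_smul, h01, h03, h13, n10, n30, n31,
    z02, z04, z05, z12, z14, z15, z23, z24, z25, z34, z35, z45,
    z20, z40, z50, z21, z41, z51, z32, z42, z52, z43, z53, z54,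
    lie_self, smul_zero, add_zero, zero_add, smul_neg, smul_smul]
  module

end AuxH16

set_option maxHeartbeats 1600000 in
/-- On a Lie algebra isomorphic to `𝔥₁₆`, every LCSKT
structure is non-trivial, i.e. `dH ≠ 0`. -/
theorem h16_lcskt_nontrivial
    (L : Type*) [LieRing L] [LieAlgebra ℝ L] (h : IsH16 L)
    (J : L →ₗ[ℝ] L) (g : L →ₗ[ℝ] L →ₗ[ℝ] ℝ)
    (hherm : IsHermitianStructure J g) (hlcskt : IsLCSKT J g) :
    ∃ W X Y Z : L, dThree (bismutH J g) W X Y Z ≠ 0 := by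
  by_contra hcon
  push_neg at hcon
  obtain ⟨e, h01, h03, h13, hz⟩ := h
  obtain ⟨⟨hJ2, hN⟩, hsym, hpos, hinv⟩ := hherm
  have brk := h16_brk e h01 h03 h13 hz
  have rbasis : ∀ i k : Fin 6, e.repr (e i) k = if i = k then 1 else 0 := by
    intro i k; rw [Basis.repr_self]; exact Finsupp.single_apply
  -- central elements
  have cenL : ∀ V : L, e.repr V 0 = 0 → e.repr V 1 = 0 → e.repr V 3 = 0 →
      ∀ W : L, ⁅V, W⁆ = 0 := by
    intro V h0 h1 h3 W
    rw [brk, h0, h1, h3]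
    simp
  have cenR : ∀ V : L, e.repr V 0 = 0 → e.repr V 1 = 0 → e.repr V 3 = 0 →
      ∀ W : L, ⁅W, V⁆ = 0 := by
    intro V h0 h1 h3 W
    rw [← lie_skew, cenL V h0 h1 h3 W, neg_zero]
  -- brackets lie in span(e3,e4,e5)
  have brk0 : ∀ V W : L, e.repr ⁅V, W⁆ 0 = 0 := by
    intro V W; rw [brk]
    simp [rbasis, Finsupp.single_apply]
  have brk1 : ∀ V W : L, e.repr ⁅V, W⁆ 1 = 0 := by
    intro V W; rw [brk]
    simp [rbasis, Finsupp.single_apply]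
  have brk3 : ∀ V W : L, e.repr ⁅V, W⁆ 3
      = e.repr V 0 * e.repr W 1 - e.repr V 1 * e.repr W 0 := by
    intro V W; rw [brk]
    simp [rbasis, Finsupp.single_apply]
  -- integrability consequences for central Z
  have dag : ∀ Z : L, (∀ W : L, ⁅W, Z⁆ = 0) → ∀ U : L, ⁅J U, J Z⁆ = J ⁅U, J Z⁆ := by
    intro Z hZ U
    have hn := hN U Z
    rw [hZ (J U), hZ U, map_zero, sub_zero, sub_zero] at hn
    exact sub_eq_zero.mp hn
  have dag2 : ∀ Z : L, (∀ W : L, ⁅W, Z⁆ = 0) → ∀ x : L, ⁅J Z, J x⁆ = J ⁅J Z, x⁆ := by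
    intro Z hZ x
    have hd3 := dag Z hZ (J x)
    rw [hJ2 x, neg_lie, lie_skew] at hd3
    rw [show ⁅J x, J Z⁆ = -⁅J Z, J x⁆ by rw [← lie_skew], map_neg] at hd3
    have := congrArg J hd3
    rw [map_neg, hJ2, neg_neg] at this
    exact this.symm
  have hH0 : ∀ x y : L, bismutH J g 0 x y = 0 := by
    intro x y
    simp [bismutH]
  -- step 1 : for central Z, [JZ, e3] = 0
  have step1 : ∀ Z : L, e.repr Z 0 = 0 → e.repr Z 1 = 0 → e.repr Z 3 = 0 →
      e.repr (J Z) 0 = 0 ∧ e.repr (J Z) 1 = 0 := by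
    intro Z hz0 hz1 hz3
    have hZL := cenL Z hz0 hz1 hz3
    have hZR := cenR Z hz0 hz1 hz3
    have hA : ⁅J Z, e 3⁆ = e.repr (J Z) 0 • e 4 + e.repr (J Z) 1 • e 5 := by
      rw [brk]
      simp [rbasis]
    set A := ⁅J Z, e 3⁆ with hAdef
    have hA0 : e.repr A 0 = 0 := brk0 _ _
    have hA1 : e.repr A 1 = 0 := brk1 _ _
    have hA3 : e.repr A 3 = 0 := by
      rw [brk3]
      simp [rbasis]
    have hAL := cenL A hA0 hA1 hA3
    have hAR := cenR A hA0 hA1 hA3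
    have hB : ⁅J Z, J (e 3)⁆ = J A := dag2 Z hZR (e 3)
    have h3B : ⁅e 3, J A⁆ = 0 := by
      rw [← hB, brk]
      simp [rbasis, brk0, brk1]
    have f1 : bismutH J g A Z (J (e 3)) = g A A := by
      have u1 : ⁅J A, J Z⁆ = 0 := by rw [dag Z hZR A, hAL (J Z), map_zero]
      have u2 : ⁅J Z, J (J (e 3))⁆ = -A := by rw [hJ2 (e 3), lie_neg, hAdef]
      have u3 : ⁅J (J (e 3)), J A⁆ = 0 := by rw [hJ2 (e 3), neg_lie, h3B, neg_zero]
      simp only [bismutH, u1, u2, u3, map_neg, map_zero, LinearMap.neg_apply,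
        LinearMap.zero_apply]
      ring
    have f2 : bismutH J g (J A) Z (e 3) = -(g A A) := by
      have u1 : ⁅J (J A), J Z⁆ = 0 := by rw [hJ2 A, neg_lie, hAL (J Z), neg_zero]
      have u3 : ⁅J (e 3), J (J A)⁆ = 0 := by rw [hJ2 A, lie_neg, hAR (J (e 3)), neg_zero]
      simp only [bismutH, u1, u3, hB, hinv, map_zero, LinearMap.zero_apply]
      ring
    have f3 : bismutH J g ⁅e 3, J (e 3)⁆ Z (J Z) = 0 := by
      have hC0 : e.repr ⁅e 3, J (e 3)⁆ 0 = 0 := brk0 _ _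
      have hC1 : e.repr ⁅e 3, J (e 3)⁆ 1 = 0 := brk1 _ _
      have hC3 : e.repr ⁅e 3, J (e 3)⁆ 3 = 0 := by
        rw [brk3]
        simp [rbasis]
      have hCL := cenL _ hC0 hC1 hC3
      have u1 : ⁅J ⁅e 3, J (e 3)⁆, J Z⁆ = 0 := by rw [dag Z hZR _, hCL (J Z), map_zero]
      have u2 : ⁅J Z, J (J Z)⁆ = 0 := by rw [hJ2 Z, lie_neg, hZR (J Z), neg_zero]
      have u3 : ⁅J (J Z), J ⁅e 3, J (e 3)⁆⁆ = 0 := by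
        rw [hJ2 Z, neg_lie, hZL (J ⁅e 3, J (e 3)⁆), neg_zero]
      simp only [bismutH, u1, u2, u3, map_zero, LinearMap.zero_apply]
      ring
    have dd := hcon Z (J Z) (e 3) (J (e 3))
    rw [dThree, hZL (J Z), hZL (e 3), hZL (J (e 3)), hH0, hH0, hH0, hB, f1, f2, f3] at dd
    have hgA : g A A = 0 := by linarith
    have hAzero : A = 0 := by
      by_contra hne
      have := hpos A hne
      linarith
    rw [hAzero] at hA
    constructor
    · have := congrArg (fun v => e.repr v 4) hA
      simpa [rbasis, Finsupp.single_apply] using this.symm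
    · have := congrArg (fun v => e.repr v 5) hA
      simpa [rbasis, Finsupp.single_apply] using this.symm
  -- step 2 : the e0-identity for central Z with JZ ∈ k
  have step2 : ∀ Z : L, (∀ W : L, ⁅Z, W⁆ = 0) → (∀ W : L, ⁅W, Z⁆ = 0) →
      e.repr (J Z) 0 = 0 → e.repr (J Z) 1 = 0 →
      -(2 * (e.repr (J Z) 3)^2 * g (e 4) (e 4))
        + e.repr (J Z) 3 * e.repr (J (e 4)) 3 * g (e 4) Z = 0 := by
    intro Z hZL hZR hj0 hj1
    set c := e.repr (J Z) 3 with hcdef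
    have hA : ⁅J Z, e 0⁆ = (-c) • e 4 := by
      rw [brk]
      simp [rbasis, hj0, hj1, hcdef]
    set A := ⁅J Z, e 0⁆ with hAdef
    have hA0 : e.repr A 0 = 0 := brk0 _ _
    have hA1 : e.repr A 1 = 0 := brk1 _ _
    have hA3 : e.repr A 3 = 0 := by
      rw [brk3]
      simp [rbasis, hj0, hj1]
    have hAL := cenL A hA0 hA1 hA3
    have hAR := cenR A hA0 hA1 hA3
    have hB : ⁅J Z, J (e 0)⁆ = J A := dag2 Z hZR (e 0)
    have hJA1 : e.repr (J A) 1 = 0 := by rw [← hB]; exact brk1 _ _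
    have hJA3 : e.repr (J A) 3 = -(c * e.repr (J (e 4)) 3) := by
      rw [hA, map_smul]
      simp
    have hJA0 : e.repr (J A) 0 = 0 := by rw [← hB]; exact brk0 _ _
    have h0B : ⁅e 0, J A⁆ = e.repr (J A) 3 • e 4 := by
      rw [brk, hJA0, hJA1]
      simp [rbasis]
    have f1 : bismutH J g A Z (J (e 0)) = g A A + e.repr (J A) 3 * g (e 4) Z := by
      have u1 : ⁅J A, J Z⁆ = 0 := by rw [dag Z hZR A, hAL (J Z), map_zero]
      have u2 : ⁅J Z, J (J (e 0))⁆ = -A := by rw [hJ2 (e 0), lie_neg, hAdef]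
      have u3 : ⁅J (J (e 0)), J A⁆ = -(e.repr (J A) 3 • e 4) := by
        rw [hJ2 (e 0), neg_lie, h0B]
      simp only [bismutH, u1, u2, u3, map_neg, map_zero, map_smul, LinearMap.neg_apply,
        LinearMap.zero_apply, LinearMap.smul_apply, smul_eq_mul]
      ring
    have f2 : bismutH J g (J A) Z (e 0) = -(g A A) := by
      have u1 : ⁅J (J A), J Z⁆ = 0 := by rw [hJ2 A, neg_lie, hAL (J Z), neg_zero]
      have u3 : ⁅J (e 0), J (J A)⁆ = 0 := by rw [hJ2 A, lie_neg, hAR (J (e 0)), neg_zero]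
      simp only [bismutH, u1, u3, hB, hinv, map_zero, LinearMap.zero_apply]
      ring
    have f3 : bismutH J g ⁅e 0, J (e 0)⁆ Z (J Z) = 0 := by
      have hCJZ : ⁅⁅e 0, J (e 0)⁆, J Z⁆ = 0 := by
        rw [brk]
        simp [brk0, brk1, hj0, hj1]
      have u1 : ⁅J ⁅e 0, J (e 0)⁆, J Z⁆ = 0 := by rw [dag Z hZR _, hCJZ, map_zero]
      have u2 : ⁅J Z, J (J Z)⁆ = 0 := by rw [hJ2 Z, lie_neg, hZR (J Z), neg_zero]
      have u3 : ⁅J (J Z), J ⁅e 0, J (e 0)⁆⁆ = 0 := by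
        rw [hJ2 Z, neg_lie, hZL (J ⁅e 0, J (e 0)⁆), neg_zero]
      simp only [bismutH, u1, u2, u3, map_zero, LinearMap.zero_apply]
      ring
    have dd := hcon Z (J Z) (e 0) (J (e 0))
    rw [dThree, hZL (J Z), hZL (e 0), hZL (J (e 0)), hH0, hH0, hH0, hB, f1, f2, f3] at dd
    have hgA : g A A = c^2 * g (e 4) (e 4) := by
      rw [hA]
      simp [map_smul]
      ring
    rw [hgA, hJA3] at dd
    linarith
  -- basis coordinate facts
  have r2 : e.repr (e 2) 0 = 0 ∧ e.repr (e 2) 1 = 0 ∧ e.repr (e 2) 3 = 0 := by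
    refine ⟨?_, ?_, ?_⟩ <;> simp [rbasis]
  have r4 : e.repr (e 4) 0 = 0 ∧ e.repr (e 4) 1 = 0 ∧ e.repr (e 4) 3 = 0 := by
    refine ⟨?_, ?_, ?_⟩ <;> simp [rbasis]
  have r5 : e.repr (e 5) 0 = 0 ∧ e.repr (e 5) 1 = 0 ∧ e.repr (e 5) 3 = 0 := by
    refine ⟨?_, ?_, ?_⟩ <;> simp [rbasis]
  have g44 : 0 < g (e 4) (e 4) := hpos (e 4) (e.ne_zero 4)
  -- apply step1 to e2, e4, e5
  have s2 := step1 (e 2) r2.1 r2.2.1 r2.2.2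
  have s4 := step1 (e 4) r4.1 r4.2.1 r4.2.2
  have s5 := step1 (e 5) r5.1 r5.2.1 r5.2.2
  -- apply step2 to e4 first
  have t4 : e.repr (J (e 4)) 3 = 0 := by
    have h2 := step2 (e 4) (cenL _ r4.1 r4.2.1 r4.2.2) (cenR _ r4.1 r4.2.1 r4.2.2) s4.1 s4.2
    have hsq : (e.repr (J (e 4)) 3)^2 * g (e 4) (e 4) = 0 := by linear_combination -h2
    rcases mul_eq_zero.mp hsq with hx | hx
    · exact pow_eq_zero_iff (by norm_num) |>.mp hx
    · linarith
  have t2 : e.repr (J (e 2)) 3 = 0 := by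
    have h2 := step2 (e 2) (cenL _ r2.1 r2.2.1 r2.2.2) (cenR _ r2.1 r2.2.1 r2.2.2) s2.1 s2.2
    rw [t4] at h2
    have hsq : (e.repr (J (e 2)) 3)^2 * g (e 4) (e 4) = 0 := by linear_combination (-1/2 : ℝ) * h2
    rcases mul_eq_zero.mp hsq with hx | hx
    · exact pow_eq_zero_iff (by norm_num) |>.mp hx
    · linarith
  have t5 : e.repr (J (e 5)) 3 = 0 := by
    have h2 := step2 (e 5) (cenL _ r5.1 r5.2.1 r5.2.2) (cenR _ r5.1 r5.2.1 r5.2.2) s5.1 s5.2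
    rw [t4] at h2
    have hsq : (e.repr (J (e 5)) 3)^2 * g (e 4) (e 4) = 0 := by linear_combination (-1/2 : ℝ) * h2
    rcases mul_eq_zero.mp hsq with hx | hx
    · exact pow_eq_zero_iff (by norm_num) |>.mp hx
    · linarith
  -- J preserves span(e2, e4, e5) : write out the matrix
  have hexp : ∀ V : L, V = e.repr V 0 • e 0 + e.repr V 1 • e 1 + e.repr V 2 • e 2
      + e.repr V 3 • e 3 + e.repr V 4 • e 4 + e.repr V 5 • e 5 := by
    intro V
    have := e.sum_repr V
    rw [Fin.sum_univ_six] at this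
    exact this.symm
  set a1 := e.repr (J (e 2)) 2 with ha1
  set a2 := e.repr (J (e 2)) 4 with ha2
  set a3 := e.repr (J (e 2)) 5 with ha3
  set b1 := e.repr (J (e 4)) 2 with hb1
  set b2 := e.repr (J (e 4)) 4 with hb2
  set b3 := e.repr (J (e 4)) 5 with hb3
  set c1 := e.repr (J (e 5)) 2 with hc1
  set c2 := e.repr (J (e 5)) 4 with hc2
  set c3 := e.repr (J (e 5)) 5 with hc3
  have hJ2e : J (e 2) = a1 • e 2 + a2 • e 4 + a3 • e 5 := by
    have := hexp (J (e 2))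
    rw [s2.1, s2.2, t2] at this
    simpa using this
  have hJ4e : J (e 4) = b1 • e 2 + b2 • e 4 + b3 • e 5 := by
    have := hexp (J (e 4))
    rw [s4.1, s4.2, t4] at this
    simpa using this
  have hJ5e : J (e 5) = c1 • e 2 + c2 • e 4 + c3 • e 5 := by
    have := hexp (J (e 5))
    rw [s5.1, s5.2, t5] at this
    simpa using this
  have sq2 : (a1 * a1 + a2 * b1 + a3 * c1) • e 2 + (a1 * a2 + a2 * b2 + a3 * c2) • e 4
      + (a1 * a3 + a2 * b3 + a3 * c3) • e 5 = -e 2 := by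
    have := hJ2 (e 2)
    rw [show J (J (e 2)) = a1 • J (e 2) + a2 • J (e 4) + a3 • J (e 5) by
      conv_lhs => rw [hJ2e]
      simp [map_add, map_smul]] at this
    rw [hJ2e, hJ4e, hJ5e] at this
    rw [← this]
    module
  have sq4 : (b1 * a1 + b2 * b1 + b3 * c1) • e 2 + (b1 * a2 + b2 * b2 + b3 * c2) • e 4
      + (b1 * a3 + b2 * b3 + b3 * c3) • e 5 = -e 4 := by
    have := hJ2 (e 4)
    rw [show J (J (e 4)) = b1 • J (e 2) + b2 • J (e 4) + b3 • J (e 5) by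
      conv_lhs => rw [hJ4e]
      simp [map_add, map_smul]] at this
    rw [hJ2e, hJ4e, hJ5e] at this
    rw [← this]
    module
  have sq5 : (c1 * a1 + c2 * b1 + c3 * c1) • e 2 + (c1 * a2 + c2 * b2 + c3 * c2) • e 4
      + (c1 * a3 + c2 * b3 + c3 * c3) • e 5 = -e 5 := by
    have := hJ2 (e 5)
    rw [show J (J (e 5)) = c1 • J (e 2) + c2 • J (e 4) + c3 • J (e 5) by
      conv_lhs => rw [hJ5e]
      simp [map_add, map_smul]] at this
    rw [hJ2e, hJ4e, hJ5e] at this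
    rw [← this]
    module
  -- extract scalar equations
  have E11 : a1 * a1 + a2 * b1 + a3 * c1 = -1 := by
    have := congrArg (fun v => e.repr v 2) sq2
    simp [Finsupp.single_apply] at this
    linear_combination this
  have E21 : a1 * a2 + a2 * b2 + a3 * c2 = 0 := by
    have := congrArg (fun v => e.repr v 4) sq2
    simp [Finsupp.single_apply] at this
    linear_combination this
  have E31 : a1 * a3 + a2 * b3 + a3 * c3 = 0 := by
    have := congrArg (fun v => e.repr v 5) sq2
    simp [Finsupp.single_apply] at this
    linear_combination this
  have E12 : b1 * a1 + b2 * b1 + b3 * c1 = 0 := by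
    have := congrArg (fun v => e.repr v 2) sq4
    simp [Finsupp.single_apply] at this
    linear_combination this
  have E22 : b1 * a2 + b2 * b2 + b3 * c2 = -1 := by
    have := congrArg (fun v => e.repr v 4) sq4
    simp [Finsupp.single_apply] at this
    linear_combination this
  have E32 : b1 * a3 + b2 * b3 + b3 * c3 = 0 := by
    have := congrArg (fun v => e.repr v 5) sq4
    simp [Finsupp.single_apply] at this
    linear_combination this
  have E13 : c1 * a1 + c2 * b1 + c3 * c1 = 0 := by
    have := congrArg (fun v => e.repr v 2) sq5
    simp [Finsupp.single_apply] at this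
    linear_combination this
  have E23 : c1 * a2 + c2 * b2 + c3 * c2 = 0 := by
    have := congrArg (fun v => e.repr v 4) sq5
    simp [Finsupp.single_apply] at this
    linear_combination this
  have E33 : c1 * a3 + c2 * b3 + c3 * c3 = -1 := by
    have := congrArg (fun v => e.repr v 5) sq5
    simp [Finsupp.single_apply] at this
    linear_combination this
  -- the 3×3 matrix squares to -1 : contradiction via determinants
  have hMM : (!![a1, b1, c1; a2, b2, c2; a3, b3, c3] : Matrix (Fin 3) (Fin 3) ℝ)
      * !![a1, b1, c1; a2, b2, c2; a3, b3, c3] = -1 := by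
    ext i j
    fin_cases i <;> fin_cases j <;>
      simp [Matrix.mul_apply, Fin.sum_univ_three, Matrix.neg_apply, Matrix.one_apply] <;>
      first
        | linear_combination E11 | linear_combination E21 | linear_combination E31
        | linear_combination E12 | linear_combination E22 | linear_combination E32
        | linear_combination E13 | linear_combination E23 | linear_combination E33
  have hdet := congrArg Matrix.det hMM
  rw [Matrix.det_mul] at hdet
  have hneg : (-1 : Matrix (Fin 3) (Fin 3) ℝ).det = -1 := by
    rw [show (-1 : Matrix (Fin 3) (Fin 3) ℝ) = (-1 : ℝ) • 1 by simp, Matrix.det_smul]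
    norm_num
  rw [hneg] at hdet
  linarith [mul_self_nonneg (!![a1, b1, c1; a2, b2, c2; a3, b3, c3] :
    Matrix (Fin 3) (Fin 3) ℝ).det, hdet]
end

section
/- There exists an abelian complex structure J on 𝔥₈ (i.e. J satisfies [JX,JY] = [X,Y] for all X,Y) and a nonzero closed 1-form α on 𝔥₈ such that for every inner product g compatible with J, the Bismut torsion 3-form of (J,g) satisfies dH = 0 and dH = α ∧ H; in particular every such (J,g) is a trivial LCSKT structure, with the same 1-form α working for all compatible metrics g. -/
open Module

section H8Aux
variable {L : Type*} [LieRing L] [LieAlgebra ℝ L]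

lemma h8_bracket_aux (e : Basis (Fin 6) ℝ L)
    (h01 : ⁅e 0, e 1⁆ = e 5)
    (hz : ∀ i j : Fin 6, i < j → ¬(i = 0 ∧ j = 1) → ⁅e i, e j⁆ = 0) :
    ∀ x y : L, ⁅x, y⁆ = (e.repr x 0 * e.repr y 1 - e.repr x 1 * e.repr y 0) • e 5 := by
  have hzz : ∀ i j : Fin 6, ¬(i = 0 ∧ j = 1) → ¬(i = 1 ∧ j = 0) → ⁅e i, e j⁆ = 0 := by
    intro i j hij hji
    rcases lt_trichotomy i j with h | rfl | h
    · exact hz i j h hij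
    · exact lie_self _
    · rw [← lie_skew, hz j i h (by rintro ⟨rfl, rfl⟩; exact hji ⟨rfl, rfl⟩), neg_zero]
  have h10 : ⁅e 1, e 0⁆ = -e 5 := by rw [← lie_skew, h01]
  have hb : ∀ i j : Fin 6, ⁅e i, e j⁆ =
      (e.repr (e i) 0 * e.repr (e j) 1 - e.repr (e i) 1 * e.repr (e j) 0) • e 5 := by
    intro i j
    fin_cases i <;> fin_cases j <;>
      simp +decide [Basis.repr_self, Finsupp.single_apply, h01, h10] <;>
      (refine hzz _ _ ?_ ?_ <;> decide)
  let B1 : L →ₗ[ℝ] L →ₗ[ℝ] L := LinearMap.mk₂ ℝ (fun x y => ⁅x, y⁆)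
    add_lie smul_lie lie_add lie_smul
  let B2 : L →ₗ[ℝ] L →ₗ[ℝ] L := LinearMap.mk₂ ℝ
    (fun x y => (e.repr x 0 * e.repr y 1 - e.repr x 1 * e.repr y 0) • e 5)
    (by intro m₁ m₂ n; simp [map_add, Finsupp.add_apply]; module)
    (by intro c m n; simp [map_smul, Finsupp.smul_apply, smul_eq_mul]; module)
    (by intro m n₁ n₂; simp [map_add, Finsupp.add_apply]; module)
    (by intro c m n; simp [map_smul, Finsupp.smul_apply, smul_eq_mul]; module)
  have hB : B1 = B2 := by
    refine e.ext fun i => e.ext fun j => ?_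
    simpa [B1, B2] using hb i j
  intro x y
  have := DFunLike.congr_fun (DFunLike.congr_fun hB x) y
  simpa [B1, B2] using this

end H8Aux

/-- There is an abelian complex structure `J` on `𝔥₈` and a
nonzero closed 1-form `α` such that for every compatible metric `g` one has
`dH = 0` and `dH = α ∧ H`; in particular every such `(J,g)` is a trivial
LCSKT structure, with the same `α` for all compatible metrics. -/
theorem h8_abelian_J_trivial_lcskt
    (L : Type*) [LieRing L] [LieAlgebra ℝ L] (h : IsH8 L) :
    ∃ (J : L →ₗ[ℝ] L) (α : Module.Dual ℝ L),
      IsComplexStructure J ∧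
      (∀ x y : L, ⁅J x, J y⁆ = ⁅x, y⁆) ∧
      α ≠ 0 ∧ IsClosedOneForm α ∧
      ∀ g : L →ₗ[ℝ] L →ₗ[ℝ] ℝ, IsCompatibleMetric J g →
        (∀ W X Y Z : L, dThree (bismutH J g) W X Y Z = 0) ∧
        (∀ W X Y Z : L,
          dThree (bismutH J g) W X Y Z = wedgeOneThree α (bismutH J g) W X Y Z) := by
  obtain ⟨e, h01, hz⟩ := h
  have hbr := h8_bracket_aux e h01 hz
  set J : L →ₗ[ℝ] L := e.constr ℝ ![e 1, -e 0, e 3, -e 2, e 5, -e 4] with hJdef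
  have hJ0 : J (e 0) = e 1 := e.constr_basis ℝ _ 0
  have hJ1 : J (e 1) = -e 0 := e.constr_basis ℝ _ 1
  have hJ2 : J (e 2) = e 3 := e.constr_basis ℝ _ 2
  have hJ3 : J (e 3) = -e 2 := e.constr_basis ℝ _ 3
  have hJ4 : J (e 4) = e 5 := e.constr_basis ℝ _ 4
  have hJ5 : J (e 5) = -e 4 := e.constr_basis ℝ _ 5
  have rJ0 : ∀ x : L, e.repr (J x) 0 = -(e.repr x 1) := by
    have h : (e.coord 0).comp J = -(e.coord 1) := by
      refine e.ext fun i => ?_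
      fin_cases i <;>
        simp +decide [hJ0, hJ1, hJ2, hJ3, hJ4, hJ5, Basis.coord_apply, Basis.repr_self,
          Finsupp.single_apply]
    intro x
    simpa [Basis.coord_apply] using DFunLike.congr_fun h x
  have rJ1 : ∀ x : L, e.repr (J x) 1 = e.repr x 0 := by
    have h : (e.coord 1).comp J = e.coord 0 := by
      refine e.ext fun i => ?_
      fin_cases i <;>
        simp +decide [hJ0, hJ1, hJ2, hJ3, hJ4, hJ5, Basis.coord_apply, Basis.repr_self,
          Finsupp.single_apply]
    intro x
    simpa [Basis.coord_apply] using DFunLike.congr_fun h x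
  have hJJ : ∀ x : L, J (J x) = -x := by
    have h : J.comp J = -LinearMap.id := by
      refine e.ext fun i => ?_
      fin_cases i <;> simp [hJ0, hJ1, hJ2, hJ3, hJ4, hJ5]
    intro x
    simpa using DFunLike.congr_fun h x
  have habel : ∀ x y : L, ⁅J x, J y⁆ = ⁅x, y⁆ := by
    intro x y
    rw [hbr (J x) (J y), hbr x y, rJ0, rJ1, rJ0, rJ1]
    congr 1
    ring
  have hmix : ∀ x y : L, ⁅J x, y⁆ = -⁅x, J y⁆ := by
    intro x y
    have h := habel x (J y)
    rw [hJJ y, lie_neg] at h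
    exact neg_eq_iff_eq_neg.mp h
  have hcs : IsComplexStructure J := by
    refine ⟨hJJ, fun x y => ?_⟩
    rw [habel, hmix x y, map_neg]
    abel
  have r50 : e.repr (e 5) 0 = 0 := by
    simp +decide [Basis.repr_self, Finsupp.single_apply]
  have r51 : e.repr (e 5) 1 = 0 := by
    simp +decide [Basis.repr_self, Finsupp.single_apply]
  have rb0 : ∀ A B : L, e.repr ⁅A, B⁆ 0 = 0 := by
    intro A B; rw [hbr]; simp [r50]
  have rb1 : ∀ A B : L, e.repr ⁅A, B⁆ 1 = 0 := by
    intro A B; rw [hbr]; simp [r51]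
  refine ⟨J, e.coord 0, hcs, habel, ?_, ?_, ?_⟩
  · intro h0
    have := DFunLike.congr_fun h0 (e 0)
    simp [Basis.coord_apply, Basis.repr_self] at this
  · intro X Y
    simp [Basis.coord_apply, rb0]
  · intro g hg
    have gb : ∀ A B Z : L, g ⁅A, B⁆ Z =
        (e.repr A 0 * e.repr B 1 - e.repr A 1 * e.repr B 0) * g (e 5) Z := by
      intro A B Z
      rw [hbr]
      simp [smul_eq_mul]
    have gb2 : ∀ Z A B : L, g Z ⁅A, B⁆ =
        (e.repr A 0 * e.repr B 1 - e.repr A 1 * e.repr B 0) * g Z (e 5) := by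
      intro Z A B
      rw [hbr]
      simp [smul_eq_mul]
    have Hform : ∀ X Y Z : L, bismutH J g X Y Z =
        -((e.repr X 0 * e.repr Y 1 - e.repr X 1 * e.repr Y 0) * g (e 5) Z
          + (e.repr Y 0 * e.repr Z 1 - e.repr Y 1 * e.repr Z 0) * g (e 5) X
          + (e.repr Z 0 * e.repr X 1 - e.repr Z 1 * e.repr X 0) * g (e 5) Y) := by
      intro X Y Z
      simp only [bismutH, habel, gb]
      ring
    have hd0 : ∀ W X Y Z : L, dThree (bismutH J g) W X Y Z = 0 := by
      intro W X Y Z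
      simp only [dThree, Hform, rb0, rb1, gb2]
      ring
    refine ⟨hd0, fun W X Y Z => ?_⟩
    rw [hd0]
    simp only [wedgeOneThree, Hform, Basis.coord_apply]
    ring
end

section
/- There exists a complex structure J on 𝔥₁₆ such that for every inner product g compatible with J, the Hermitian structure (J,g) is a non-trivial LCSKT structure: its Bismut torsion 3-form satisfies dH ≠ 0 and there exists a nonzero closed 1-form α with dH = α ∧ H. -/
open Module

set_option maxHeartbeats 4000000 in
/-- There is a complex structure `J` on `𝔥₁₆` such that for
every compatible metric `g`, `(J,g)` is a non-trivial LCSKT structure. -/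
theorem h16_J_all_metrics_nontrivial_lcskt
    (L : Type*) [LieRing L] [LieAlgebra ℝ L] (h : IsH16 L) :
    ∃ J : L →ₗ[ℝ] L, IsComplexStructure J ∧
      ∀ g : L →ₗ[ℝ] L →ₗ[ℝ] ℝ, IsCompatibleMetric J g →
        (∃ W X Y Z : L, dThree (bismutH J g) W X Y Z ≠ 0) ∧
        (∃ α : Module.Dual ℝ L, α ≠ 0 ∧ IsClosedOneForm α ∧
          ∀ W X Y Z : L,
            dThree (bismutH J g) W X Y Z = wedgeOneThree α (bismutH J g) W X Y Z) := by
  obtain ⟨e, h01, h03, h13, hz⟩ := h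
  have b00 : ⁅e 0, e 0⁆ = 0 := lie_self (e 0)
  have b01 : ⁅e 0, e 1⁆ = e 3 := h01
  have b02 : ⁅e 0, e 2⁆ = 0 := hz 0 2 (by decide) (by decide) (by decide) (by decide)
  have b03 : ⁅e 0, e 3⁆ = e 4 := h03
  have b04 : ⁅e 0, e 4⁆ = 0 := hz 0 4 (by decide) (by decide) (by decide) (by decide)
  have b05 : ⁅e 0, e 5⁆ = 0 := hz 0 5 (by decide) (by decide) (by decide) (by decide)
  have b10 : ⁅e 1, e 0⁆ = -(e 3) := by rw [← lie_skew, b01]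
  have b11 : ⁅e 1, e 1⁆ = 0 := lie_self (e 1)
  have b12 : ⁅e 1, e 2⁆ = 0 := hz 1 2 (by decide) (by decide) (by decide) (by decide)
  have b13 : ⁅e 1, e 3⁆ = e 5 := h13
  have b14 : ⁅e 1, e 4⁆ = 0 := hz 1 4 (by decide) (by decide) (by decide) (by decide)
  have b15 : ⁅e 1, e 5⁆ = 0 := hz 1 5 (by decide) (by decide) (by decide) (by decide)
  have b20 : ⁅e 2, e 0⁆ = 0 := by rw [← lie_skew, b02, neg_zero]
  have b21 : ⁅e 2, e 1⁆ = 0 := by rw [← lie_skew, b12, neg_zero]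
  have b22 : ⁅e 2, e 2⁆ = 0 := lie_self (e 2)
  have b23 : ⁅e 2, e 3⁆ = 0 := hz 2 3 (by decide) (by decide) (by decide) (by decide)
  have b24 : ⁅e 2, e 4⁆ = 0 := hz 2 4 (by decide) (by decide) (by decide) (by decide)
  have b25 : ⁅e 2, e 5⁆ = 0 := hz 2 5 (by decide) (by decide) (by decide) (by decide)
  have b30 : ⁅e 3, e 0⁆ = -(e 4) := by rw [← lie_skew, b03]
  have b31 : ⁅e 3, e 1⁆ = -(e 5) := by rw [← lie_skew, b13]
  have b32 : ⁅e 3, e 2⁆ = 0 := by rw [← lie_skew, b23, neg_zero]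
  have b33 : ⁅e 3, e 3⁆ = 0 := lie_self (e 3)
  have b34 : ⁅e 3, e 4⁆ = 0 := hz 3 4 (by decide) (by decide) (by decide) (by decide)
  have b35 : ⁅e 3, e 5⁆ = 0 := hz 3 5 (by decide) (by decide) (by decide) (by decide)
  have b40 : ⁅e 4, e 0⁆ = 0 := by rw [← lie_skew, b04, neg_zero]
  have b41 : ⁅e 4, e 1⁆ = 0 := by rw [← lie_skew, b14, neg_zero]
  have b42 : ⁅e 4, e 2⁆ = 0 := by rw [← lie_skew, b24, neg_zero]
  have b43 : ⁅e 4, e 3⁆ = 0 := by rw [← lie_skew, b34, neg_zero]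
  have b44 : ⁅e 4, e 4⁆ = 0 := lie_self (e 4)
  have b45 : ⁅e 4, e 5⁆ = 0 := hz 4 5 (by decide) (by decide) (by decide) (by decide)
  have b50 : ⁅e 5, e 0⁆ = 0 := by rw [← lie_skew, b05, neg_zero]
  have b51 : ⁅e 5, e 1⁆ = 0 := by rw [← lie_skew, b15, neg_zero]
  have b52 : ⁅e 5, e 2⁆ = 0 := by rw [← lie_skew, b25, neg_zero]
  have b53 : ⁅e 5, e 3⁆ = 0 := by rw [← lie_skew, b35, neg_zero]
  have b54 : ⁅e 5, e 4⁆ = 0 := by rw [← lie_skew, b45, neg_zero]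
  have b55 : ⁅e 5, e 5⁆ = 0 := lie_self (e 5)
  have key : ∀ X Y : L, ⁅X, Y⁆ =
      (e.repr X 0 * e.repr Y 1 - e.repr X 1 * e.repr Y 0) • e 3
      + (e.repr X 0 * e.repr Y 3 - e.repr X 3 * e.repr Y 0) • e 4
      + (e.repr X 1 * e.repr Y 3 - e.repr X 3 * e.repr Y 1) • e 5 := by
    intro X Y
    conv_lhs => rw [← e.sum_repr X, ← e.sum_repr Y]
    simp only [Fin.sum_univ_six, add_lie, lie_add, smul_lie, lie_smul]
    simp only [b00, b01, b02, b03, b04, b05, b10, b11, b12, b13, b14, b15, b20, b21, b22, b23, b24, b25, b30, b31, b32, b33, b34, b35, b40, b41, b42, b43, b44, b45, b50, b51, b52, b53, b54, b55]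
    module
  let J : L →ₗ[ℝ] L := e.constr ℝ ![e 1, -e 0, e 3, -e 2, e 5, -e 4]
  have hJ0 : J (e 0) = e 1 := by
    rw [show J = e.constr ℝ ![e 1, -e 0, e 3, -e 2, e 5, -e 4] from rfl, Basis.constr_basis]; rfl
  have hJ1 : J (e 1) = -e 0 := by
    rw [show J = e.constr ℝ ![e 1, -e 0, e 3, -e 2, e 5, -e 4] from rfl, Basis.constr_basis]; rfl
  have hJ2 : J (e 2) = e 3 := by
    rw [show J = e.constr ℝ ![e 1, -e 0, e 3, -e 2, e 5, -e 4] from rfl, Basis.constr_basis]; rfl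
  have hJ3 : J (e 3) = -e 2 := by
    rw [show J = e.constr ℝ ![e 1, -e 0, e 3, -e 2, e 5, -e 4] from rfl, Basis.constr_basis]; rfl
  have hJ4 : J (e 4) = e 5 := by
    rw [show J = e.constr ℝ ![e 1, -e 0, e 3, -e 2, e 5, -e 4] from rfl, Basis.constr_basis]; rfl
  have hJ5 : J (e 5) = -e 4 := by
    rw [show J = e.constr ℝ ![e 1, -e 0, e 3, -e 2, e 5, -e 4] from rfl, Basis.constr_basis]; rfl
  have hJc : ∀ X : L, J X = (-(e.repr X 1)) • e 0 + e.repr X 0 • e 1 + (-(e.repr X 3)) • e 2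
      + e.repr X 2 • e 3 + (-(e.repr X 5)) • e 4 + e.repr X 4 • e 5 := by
    intro X
    conv_lhs => rw [← e.sum_repr X]
    rw [map_sum, Fin.sum_univ_six]
    rw [map_smul, map_smul, map_smul, map_smul, map_smul, map_smul,
        hJ0, hJ1, hJ2, hJ3, hJ4, hJ5]
    module
  have hr0 : ∀ X : L, e.repr (J X) 0 = -(e.repr X 1) := by
    intro X; rw [hJc X]
    simp [Basis.repr_self, Finsupp.single_apply]
  have hr1 : ∀ X : L, e.repr (J X) 1 = e.repr X 0 := by
    intro X; rw [hJc X]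
    simp [Basis.repr_self, Finsupp.single_apply]
  have hr2 : ∀ X : L, e.repr (J X) 2 = -(e.repr X 3) := by
    intro X; rw [hJc X]
    simp [Basis.repr_self, Finsupp.single_apply]
  have hr3 : ∀ X : L, e.repr (J X) 3 = e.repr X 2 := by
    intro X; rw [hJc X]
    simp [Basis.repr_self, Finsupp.single_apply]
  have hr4 : ∀ X : L, e.repr (J X) 4 = -(e.repr X 5) := by
    intro X; rw [hJc X]
    simp [Basis.repr_self, Finsupp.single_apply]
  have hr5 : ∀ X : L, e.repr (J X) 5 = e.repr X 4 := by
    intro X; rw [hJc X]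
    simp [Basis.repr_self, Finsupp.single_apply]
  have hJJ : ∀ X : L, J (J X) = -X := by
    intro X
    rw [hJc (J X), hr0 X, hr1 X, hr2 X, hr3 X, hr4 X, hr5 X]
    conv_rhs => rw [← e.sum_repr X, Fin.sum_univ_six]
    module
  have hint : ∀ x y : L, ⁅J x, J y⁆ - J ⁅J x, y⁆ - J ⁅x, J y⁆ - ⁅x, y⁆ = 0 := by
    intro x y
    rw [key (J x) (J y), key (J x) y, key x (J y), key x y,
        hr0 x, hr1 x, hr3 x, hr0 y, hr1 y, hr3 y]
    simp only [map_add, map_smul, hJ3, hJ4, hJ5]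
    module
  have keyJ : ∀ X Y : L, ⁅J X, J Y⁆ =
      (e.repr X 0 * e.repr Y 1 - e.repr X 1 * e.repr Y 0) • e 3
      + (-(e.repr X 1 * e.repr Y 2 - e.repr X 2 * e.repr Y 1)) • e 4
      + (e.repr X 0 * e.repr Y 2 - e.repr X 2 * e.repr Y 0) • e 5 := by
    intro X Y
    rw [key (J X) (J Y), hr0 X, hr1 X, hr3 X, hr0 Y, hr1 Y, hr3 Y]
    module
  have hrc0 : ∀ a b c : ℝ, e.repr (a • e 3 + b • e 4 + c • e 5) 0 = 0 := by
    intro a b c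
    simp [Basis.repr_self, Finsupp.single_apply]
  have hrc1 : ∀ a b c : ℝ, e.repr (a • e 3 + b • e 4 + c • e 5) 1 = 0 := by
    intro a b c
    simp [Basis.repr_self, Finsupp.single_apply]
  have hrc2 : ∀ a b c : ℝ, e.repr (a • e 3 + b • e 4 + c • e 5) 2 = 0 := by
    intro a b c
    simp [Basis.repr_self, Finsupp.single_apply]
  have hrc3 : ∀ a b c : ℝ, e.repr (a • e 3 + b • e 4 + c • e 5) 3 = a := by
    intro a b c
    simp [Basis.repr_self, Finsupp.single_apply]
  have hrc4 : ∀ a b c : ℝ, e.repr (a • e 3 + b • e 4 + c • e 5) 4 = b := by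
    intro a b c
    simp [Basis.repr_self, Finsupp.single_apply]
  have hrc5 : ∀ a b c : ℝ, e.repr (a • e 3 + b • e 4 + c • e 5) 5 = c := by
    intro a b c
    simp [Basis.repr_self, Finsupp.single_apply]
  have hrb : ∀ i j : Fin 6, e.repr (e i) j = if i = j then 1 else 0 := by
    intro i j; rw [Basis.repr_self]; exact Finsupp.single_apply
  refine ⟨J, ⟨hJJ, hint⟩, ?_⟩
  intro g hg
  obtain ⟨hsym, hpos, hinv⟩ := hg
  have c33 : g (e 3) (e 3) = g (e 2) (e 2) := by
    have h := hinv (e 2) (e 2); rw [hJ2] at h; exact h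
  have c34 : g (e 3) (e 4) = -(g (e 2) (e 5)) := by
    have h := hinv (e 2) (e 5); rw [hJ2, hJ5, map_neg] at h; linarith
  have c35 : g (e 3) (e 5) = g (e 2) (e 4) := by
    have h := hinv (e 2) (e 4); rw [hJ2, hJ4] at h; exact h
  have c55 : g (e 5) (e 5) = g (e 4) (e 4) := by
    have h := hinv (e 4) (e 4); rw [hJ4] at h; exact h
  have c45 : g (e 4) (e 5) = 0 := by
    have h := hinv (e 4) (e 5); rw [hJ4, hJ5, map_neg] at h
    have h2 := hsym (e 5) (e 4); linarith
  have c32 : g (e 3) (e 2) = 0 := by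
    have h := hinv (e 2) (e 3); rw [hJ2, hJ3, map_neg] at h
    have h2 := hsym (e 2) (e 3); linarith
  have c30 : g (e 3) (e 0) = g (e 0) (e 3) := hsym (e 3) (e 0)
  have c31 : g (e 3) (e 1) = g (e 0) (e 2) := by
    have h := hinv (e 0) (e 2); rw [hJ0, hJ2] at h
    have h2 := hsym (e 3) (e 1); linarith
  have c40 : g (e 4) (e 0) = g (e 0) (e 4) := hsym (e 4) (e 0)
  have c41 : g (e 4) (e 1) = -(g (e 0) (e 5)) := by
    have h := hinv (e 0) (e 5); rw [hJ0, hJ5, map_neg] at h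
    have h2 := hsym (e 4) (e 1); linarith
  have c42 : g (e 4) (e 2) = g (e 2) (e 4) := hsym (e 4) (e 2)
  have c43 : g (e 4) (e 3) = -(g (e 2) (e 5)) := by rw [hsym (e 4) (e 3), c34]
  have c50 : g (e 5) (e 0) = g (e 0) (e 5) := hsym (e 5) (e 0)
  have c51 : g (e 5) (e 1) = g (e 0) (e 4) := by
    have h := hinv (e 0) (e 4); rw [hJ0, hJ4] at h
    have h2 := hsym (e 5) (e 1); linarith
  have c52 : g (e 5) (e 2) = g (e 2) (e 5) := hsym (e 5) (e 2)
  have c53 : g (e 5) (e 3) = g (e 2) (e 4) := by rw [hsym (e 5) (e 3), c35]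
  have c54 : g (e 5) (e 4) = 0 := by rw [hsym (e 5) (e 4), c45]
  have hG3 : ∀ V : L, g (e 3) V = e.repr V 0 * g (e 0) (e 3) + e.repr V 1 * g (e 0) (e 2)
      + e.repr V 3 * g (e 2) (e 2) - e.repr V 4 * g (e 2) (e 5) + e.repr V 5 * g (e 2) (e 4) := by
    intro V
    conv_lhs => rw [← e.sum_repr V]
    rw [map_sum, Fin.sum_univ_six]
    simp only [map_smul, smul_eq_mul]
    rw [c30, c31, c32, c33, c34, c35]; ring
  have hG4 : ∀ V : L, g (e 4) V = e.repr V 0 * g (e 0) (e 4) - e.repr V 1 * g (e 0) (e 5)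
      + e.repr V 2 * g (e 2) (e 4) - e.repr V 3 * g (e 2) (e 5) + e.repr V 4 * g (e 4) (e 4) := by
    intro V
    conv_lhs => rw [← e.sum_repr V]
    rw [map_sum, Fin.sum_univ_six]
    simp only [map_smul, smul_eq_mul]
    rw [c40, c41, c42, c43, c45]; ring
  have hG5 : ∀ V : L, g (e 5) V = e.repr V 0 * g (e 0) (e 5) + e.repr V 1 * g (e 0) (e 4)
      + e.repr V 2 * g (e 2) (e 5) + e.repr V 3 * g (e 2) (e 4) + e.repr V 5 * g (e 4) (e 4) := by
    intro V
    conv_lhs => rw [← e.sum_repr V]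
    rw [map_sum, Fin.sum_univ_six]
    simp only [map_smul, smul_eq_mul]
    rw [c50, c51, c52, c53, c54, c55]; ring
  have hHfull : ∀ X Y Z : L, bismutH J g X Y Z =
      (2) * (g (e 0) (e 4)) * (e.repr X 0) * (e.repr Y 1) * (e.repr Z 2)
      + (-2) * (g (e 0) (e 4)) * (e.repr X 0) * (e.repr Y 2) * (e.repr Z 1)
      + (-2) * (g (e 0) (e 4)) * (e.repr X 1) * (e.repr Y 0) * (e.repr Z 2)
      + (2) * (g (e 0) (e 4)) * (e.repr X 1) * (e.repr Y 2) * (e.repr Z 0)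
      + (2) * (g (e 0) (e 4)) * (e.repr X 2) * (e.repr Y 0) * (e.repr Z 1)
      + (-2) * (g (e 0) (e 4)) * (e.repr X 2) * (e.repr Y 1) * (e.repr Z 0)
      + (-1) * (g (e 2) (e 2)) * (e.repr X 0) * (e.repr Y 1) * (e.repr Z 3)
      + (1) * (g (e 2) (e 2)) * (e.repr X 0) * (e.repr Y 3) * (e.repr Z 1)
      + (1) * (g (e 2) (e 2)) * (e.repr X 1) * (e.repr Y 0) * (e.repr Z 3)
      + (-1) * (g (e 2) (e 2)) * (e.repr X 1) * (e.repr Y 3) * (e.repr Z 0)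
      + (-1) * (g (e 2) (e 2)) * (e.repr X 3) * (e.repr Y 0) * (e.repr Z 1)
      + (1) * (g (e 2) (e 2)) * (e.repr X 3) * (e.repr Y 1) * (e.repr Z 0)
      + (-1) * (g (e 2) (e 4)) * (e.repr X 0) * (e.repr Y 1) * (e.repr Z 5)
      + (-1) * (g (e 2) (e 4)) * (e.repr X 0) * (e.repr Y 2) * (e.repr Z 3)
      + (1) * (g (e 2) (e 4)) * (e.repr X 0) * (e.repr Y 3) * (e.repr Z 2)
      + (1) * (g (e 2) (e 4)) * (e.repr X 0) * (e.repr Y 5) * (e.repr Z 1)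
      + (1) * (g (e 2) (e 4)) * (e.repr X 1) * (e.repr Y 0) * (e.repr Z 5)
      + (-1) * (g (e 2) (e 4)) * (e.repr X 1) * (e.repr Y 5) * (e.repr Z 0)
      + (1) * (g (e 2) (e 4)) * (e.repr X 2) * (e.repr Y 0) * (e.repr Z 3)
      + (-1) * (g (e 2) (e 4)) * (e.repr X 2) * (e.repr Y 3) * (e.repr Z 0)
      + (-1) * (g (e 2) (e 4)) * (e.repr X 3) * (e.repr Y 0) * (e.repr Z 2)
      + (1) * (g (e 2) (e 4)) * (e.repr X 3) * (e.repr Y 2) * (e.repr Z 0)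
      + (-1) * (g (e 2) (e 4)) * (e.repr X 5) * (e.repr Y 0) * (e.repr Z 1)
      + (1) * (g (e 2) (e 4)) * (e.repr X 5) * (e.repr Y 1) * (e.repr Z 0)
      + (1) * (g (e 2) (e 5)) * (e.repr X 0) * (e.repr Y 1) * (e.repr Z 4)
      + (-1) * (g (e 2) (e 5)) * (e.repr X 0) * (e.repr Y 4) * (e.repr Z 1)
      + (-1) * (g (e 2) (e 5)) * (e.repr X 1) * (e.repr Y 0) * (e.repr Z 4)
      + (-1) * (g (e 2) (e 5)) * (e.repr X 1) * (e.repr Y 2) * (e.repr Z 3)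
      + (1) * (g (e 2) (e 5)) * (e.repr X 1) * (e.repr Y 3) * (e.repr Z 2)
      + (1) * (g (e 2) (e 5)) * (e.repr X 1) * (e.repr Y 4) * (e.repr Z 0)
      + (1) * (g (e 2) (e 5)) * (e.repr X 2) * (e.repr Y 1) * (e.repr Z 3)
      + (-1) * (g (e 2) (e 5)) * (e.repr X 2) * (e.repr Y 3) * (e.repr Z 1)
      + (-1) * (g (e 2) (e 5)) * (e.repr X 3) * (e.repr Y 1) * (e.repr Z 2)
      + (1) * (g (e 2) (e 5)) * (e.repr X 3) * (e.repr Y 2) * (e.repr Z 1)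
      + (1) * (g (e 2) (e 5)) * (e.repr X 4) * (e.repr Y 0) * (e.repr Z 1)
      + (-1) * (g (e 2) (e 5)) * (e.repr X 4) * (e.repr Y 1) * (e.repr Z 0)
      + (-1) * (g (e 4) (e 4)) * (e.repr X 0) * (e.repr Y 2) * (e.repr Z 5)
      + (1) * (g (e 4) (e 4)) * (e.repr X 0) * (e.repr Y 5) * (e.repr Z 2)
      + (1) * (g (e 4) (e 4)) * (e.repr X 1) * (e.repr Y 2) * (e.repr Z 4)
      + (-1) * (g (e 4) (e 4)) * (e.repr X 1) * (e.repr Y 4) * (e.repr Z 2)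
      + (1) * (g (e 4) (e 4)) * (e.repr X 2) * (e.repr Y 0) * (e.repr Z 5)
      + (-1) * (g (e 4) (e 4)) * (e.repr X 2) * (e.repr Y 1) * (e.repr Z 4)
      + (1) * (g (e 4) (e 4)) * (e.repr X 2) * (e.repr Y 4) * (e.repr Z 1)
      + (-1) * (g (e 4) (e 4)) * (e.repr X 2) * (e.repr Y 5) * (e.repr Z 0)
      + (1) * (g (e 4) (e 4)) * (e.repr X 4) * (e.repr Y 1) * (e.repr Z 2)
      + (-1) * (g (e 4) (e 4)) * (e.repr X 4) * (e.repr Y 2) * (e.repr Z 1)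
      + (-1) * (g (e 4) (e 4)) * (e.repr X 5) * (e.repr Y 0) * (e.repr Z 2)
      + (1) * (g (e 4) (e 4)) * (e.repr X 5) * (e.repr Y 2) * (e.repr Z 0) := by
    intro X Y Z
    simp only [bismutH]
    rw [keyJ X Y, keyJ Y Z, keyJ Z X]
    simp only [map_add, map_smul, map_neg, map_sub, LinearMap.add_apply, LinearMap.smul_apply,
      LinearMap.neg_apply, LinearMap.sub_apply, smul_eq_mul]
    rw [hG3 X, hG3 Y, hG3 Z, hG4 X, hG4 Y, hG4 Z, hG5 X, hG5 Y, hG5 Z]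
    ring
  have hH0 : ∀ Y Z : L, bismutH J g 0 Y Z = 0 := by
    intro Y Z; simp [bismutH]
  have ht44 : 0 < g (e 4) (e 4) := hpos (e 4) (e.ne_zero 4)
  have hvv : g (g (e 4) (e 4) • e 2 - g (e 2) (e 4) • e 4 - g (e 2) (e 5) • e 5)
      (g (e 4) (e 4) • e 2 - g (e 2) (e 4) • e 4 - g (e 2) (e 5) • e 5)
      = g (e 4) (e 4) * (g (e 2) (e 2) * g (e 4) (e 4) - g (e 2) (e 4) ^ 2 - g (e 2) (e 5) ^ 2) := by
    simp only [map_sub, map_smul, LinearMap.sub_apply, LinearMap.smul_apply, smul_eq_mul]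
    rw [c42, c52, c45, c54, c55]
    ring
  have hvne : (g (e 4) (e 4) • e 2 - g (e 2) (e 4) • e 4 - g (e 2) (e 5) • e 5 : L) ≠ 0 := by
    intro h0
    have h2 : e.repr (g (e 4) (e 4) • e 2 - g (e 2) (e 4) • e 4 - g (e 2) (e 5) • e 5) 2
        = g (e 4) (e 4) := by
      simp [Basis.repr_self, Finsupp.single_apply]
    rw [h0] at h2
    simp only [map_zero, Finsupp.coe_zero, Pi.zero_apply] at h2
    linarith
  have hDpos : 0 < (g (e 2) (e 2) * g (e 4) (e 4) - g (e 2) (e 4) ^ 2 - g (e 2) (e 5) ^ 2) := by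
    have hv := hpos _ hvne
    rw [hvv] at hv
    nlinarith [ht44, hv]
  have hα : ∀ V : L, (((-(2 * g (e 4) (e 4) * g (e 2) (e 5)) / (g (e 2) (e 2) * g (e 4) (e 4) - g (e 2) (e 4) ^ 2 - g (e 2) (e 5) ^ 2)) • e.coord 0 + ((2 * g (e 4) (e 4) * g (e 2) (e 4)) / (g (e 2) (e 2) * g (e 4) (e 4) - g (e 2) (e 4) ^ 2 - g (e 2) (e 5) ^ 2)) • e.coord 1 + ((2 * g (e 4) (e 4) ^ 2) / (g (e 2) (e 2) * g (e 4) (e 4) - g (e 2) (e 4) ^ 2 - g (e 2) (e 5) ^ 2)) • e.coord 2 : Module.Dual ℝ L)) V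
      = (-(2 * g (e 4) (e 4) * g (e 2) (e 5)) / (g (e 2) (e 2) * g (e 4) (e 4) - g (e 2) (e 4) ^ 2 - g (e 2) (e 5) ^ 2)) * e.repr V 0 + ((2 * g (e 4) (e 4) * g (e 2) (e 4)) / (g (e 2) (e 2) * g (e 4) (e 4) - g (e 2) (e 4) ^ 2 - g (e 2) (e 5) ^ 2)) * e.repr V 1 + ((2 * g (e 4) (e 4) ^ 2) / (g (e 2) (e 2) * g (e 4) (e 4) - g (e 2) (e 4) ^ 2 - g (e 2) (e 5) ^ 2)) * e.repr V 2 := by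
    intro V
    simp [Basis.coord_apply]
  constructor
  · refine ⟨e 0, e 1, e 2, e 3, ?_⟩
    have hnt : dThree (bismutH J g) (e 0) (e 1) (e 2) (e 3) = -(2 * g (e 4) (e 4)) := by
      simp only [dThree]
      rw [b01, b02, b03, b12, b13, b23]
      rw [hH0 (e 1) (e 3), hH0 (e 0) (e 3), hH0 (e 0) (e 1)]
      rw [hHfull (e 3) (e 2) (e 3), hHfull (e 4) (e 1) (e 2), hHfull (e 5) (e 0) (e 2)]
      simp only [hrb]
      simp
      ring_nf
    rw [hnt]
    have : 0 < 2 * g (e 4) (e 4) := by linarith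
    intro hcon
    rw [neg_eq_zero] at hcon
    linarith
  · refine ⟨((-(2 * g (e 4) (e 4) * g (e 2) (e 5)) / (g (e 2) (e 2) * g (e 4) (e 4) - g (e 2) (e 4) ^ 2 - g (e 2) (e 5) ^ 2)) • e.coord 0 + ((2 * g (e 4) (e 4) * g (e 2) (e 4)) / (g (e 2) (e 2) * g (e 4) (e 4) - g (e 2) (e 4) ^ 2 - g (e 2) (e 5) ^ 2)) • e.coord 1 + ((2 * g (e 4) (e 4) ^ 2) / (g (e 2) (e 2) * g (e 4) (e 4) - g (e 2) (e 4) ^ 2 - g (e 2) (e 5) ^ 2)) • e.coord 2 : Module.Dual ℝ L), ?_, ?_, ?_⟩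
    · have h2 : (((-(2 * g (e 4) (e 4) * g (e 2) (e 5)) / (g (e 2) (e 2) * g (e 4) (e 4) - g (e 2) (e 4) ^ 2 - g (e 2) (e 5) ^ 2)) • e.coord 0 + ((2 * g (e 4) (e 4) * g (e 2) (e 4)) / (g (e 2) (e 2) * g (e 4) (e 4) - g (e 2) (e 4) ^ 2 - g (e 2) (e 5) ^ 2)) • e.coord 1 + ((2 * g (e 4) (e 4) ^ 2) / (g (e 2) (e 2) * g (e 4) (e 4) - g (e 2) (e 4) ^ 2 - g (e 2) (e 5) ^ 2)) • e.coord 2 : Module.Dual ℝ L)) (e 2) = (2 * g (e 4) (e 4) ^ 2) / (g (e 2) (e 2) * g (e 4) (e 4) - g (e 2) (e 4) ^ 2 - g (e 2) (e 5) ^ 2) := by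
        rw [hα (e 2), hrb 2 0, hrb 2 1, hrb 2 2,
          if_neg (by decide : ¬((2:Fin 6) = 0)), if_neg (by decide : ¬((2:Fin 6) = 1)),
          if_pos rfl]
        ring
      intro h0
      rw [h0] at h2
      simp only [LinearMap.zero_apply] at h2
      have ha2 : 0 < (2 * g (e 4) (e 4) ^ 2) / (g (e 2) (e 2) * g (e 4) (e 4) - g (e 2) (e 4) ^ 2 - g (e 2) (e 5) ^ 2) := div_pos (by nlinarith [ht44]) hDpos
      linarith
    · intro X Y
      rw [key X Y, hα]
      rw [hrc0, hrc1, hrc2]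
      ring
    · intro W X Y Z
      simp only [dThree, wedgeOneThree]
      simp only [key]
      simp only [hHfull]
      simp only [hrc0, hrc1, hrc2, hrc3, hrc4, hrc5]
      simp only [hα]
      field_simp
      ring
end

section
/- Let 𝔤 be a non-abelian 6-dimensional nilpotent real Lie algebra and let J be a bi-invariant complex structure on 𝔤, i.e. J[X,Y] = [JX,Y] for all X, Y ∈ 𝔤. Then there is no inner product g compatible with J such that (J,g) is LCSKT. -/
open Module

/-- On a non-abelian 6-dimensional nilpotent Lie algebra, a
bi-invariant complex structure admits no compatible metric making `(J,g)`
LCSKT. -/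
theorem biinvariant_J_no_lcskt
    (L : Type*) [LieRing L] [LieAlgebra ℝ L] [FiniteDimensional ℝ L]
    (hdim : finrank ℝ L = 6) (hnil : LieRing.IsNilpotent L)
    (hnonab : ∃ x y : L, ⁅x, y⁆ ≠ 0)
    (J : L →ₗ[ℝ] L) (hJ : IsComplexStructure J)
    (hbi : ∀ x y : L, J ⁅x, y⁆ = ⁅J x, y⁆) :
    ∀ g : L →ₗ[ℝ] L →ₗ[ℝ] ℝ, IsCompatibleMetric J g → ¬ IsLCSKT J g := by
  intro g hg hL
  classical
  obtain ⟨α, hα0, hαcl, heq⟩ := hL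
  have hJ2 : ∀ v : L, J (J v) = -v := hJ.1
  -- basic bracket identities from bi-invariance
  have hbi' : ∀ u v : L, ⁅u, J v⁆ = J ⁅u, v⁆ := by
    intro u v
    have h2 : ⁅u, J v⁆ = -⁅J v, u⁆ := (lie_skew _ _).symm
    rw [h2, ← hbi v u, ← map_neg, lie_skew]
  have hJJ : ∀ u v : L, ⁅J u, J v⁆ = -⁅u, v⁆ := by
    intro u v
    rw [← hbi u (J v), hbi' u v, hJ2]
  -- a nonzero central element of the derived algebra
  have hex0 : ∃ k, LieModule.lowerCentralSeries ℝ L L k = ⊥ := @LieModule.IsNilpotent.nilpotent ℝ L L _ _ _ _ _ _ _ hnil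
  set k0 := Nat.find hex0 with hk0def
  have hk0 : LieModule.lowerCentralSeries ℝ L L k0 = ⊥ := Nat.find_spec hex0
  have hne : ∀ m, m < k0 → LieModule.lowerCentralSeries ℝ L L m ≠ ⊥ := fun m hm => Nat.find_min hex0 hm
  have h1ne : LieModule.lowerCentralSeries ℝ L L 1 ≠ ⊥ := by
    intro h
    obtain ⟨x, y, hxy⟩ := hnonab
    apply hxy
    have hm : ⁅x, y⁆ ∈ LieModule.lowerCentralSeries ℝ L L 1 := by
      rw [show (1 : ℕ) = 0 + 1 from rfl, LieModule.lowerCentralSeries_succ, LieModule.lowerCentralSeries_zero]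
      exact LieSubmodule.lie_mem_lie (LieSubmodule.mem_top x) (LieSubmodule.mem_top y)
    rw [h] at hm
    exact (LieSubmodule.mem_bot _).mp hm
  have hk2 : 2 ≤ k0 := by
    by_contra h
    push_neg at h
    apply h1ne
    have hle : LieModule.lowerCentralSeries ℝ L L 1 ≤ LieModule.lowerCentralSeries ℝ L L k0 :=
      LieModule.antitone_lowerCentralSeries ℝ L L (by omega)
    rw [hk0] at hle
    exact le_bot_iff.mp hle
  have hne' : LieModule.lowerCentralSeries ℝ L L (k0 - 1) ≠ ⊥ := hne _ (by omega)
  obtain ⟨c, hc_mem, hc0⟩ : ∃ c, c ∈ LieModule.lowerCentralSeries ℝ L L (k0 - 1) ∧ c ≠ 0 := by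
    by_contra h
    push_neg at h
    apply hne'
    rw [LieSubmodule.eq_bot_iff]
    exact h
  have hcz : ∀ w : L, ⁅w, c⁆ = 0 := by
    intro w
    have hm : ⁅w, c⁆ ∈ LieModule.lowerCentralSeries ℝ L L k0 := by
      rw [show k0 = (k0 - 1) + 1 by omega, LieModule.lowerCentralSeries_succ]
      exact LieSubmodule.lie_mem_lie (LieSubmodule.mem_top w) hc_mem
    rw [hk0] at hm
    exact (LieSubmodule.mem_bot _).mp hm
  have hcz' : ∀ w : L, ⁅c, w⁆ = 0 := fun w => by
    rw [← lie_skew, hcz w, neg_zero]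
  -- α vanishes at c, and c pairs nontrivially with some bracket
  have hc1 : c ∈ LieModule.lowerCentralSeries ℝ L L 1 :=
    LieModule.antitone_lowerCentralSeries ℝ L L (show 1 ≤ k0 - 1 by omega) hc_mem
  rw [show (1 : ℕ) = 0 + 1 from rfl, LieModule.lowerCentralSeries_succ,
    LieModule.lowerCentralSeries_zero, LieSubmodule.lieIdeal_oper_eq_span] at hc1
  have hαc : α c = 0 := by
    have hle : LieSubmodule.lieSpan ℝ L
        {m : L | ∃ (x : (⊤ : LieIdeal ℝ L)) (n : (⊤ : LieSubmodule ℝ L L)),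
          ⁅(x : L), (n : L)⁆ = m} ≤
        ({ LinearMap.ker α with
           lie_mem := fun {x m} hm => by
             simpa using hαcl x m } : LieSubmodule ℝ L L) := by
      rw [LieSubmodule.lieSpan_le]
      rintro m ⟨u, v, rfl⟩
      simpa using hαcl (u : L) (v : L)
    simpa using hle hc1
  -- there exist x, y with g ⁅x,y⁆ c ≠ 0
  have hex : ∃ x y : L, g ⁅x, y⁆ c ≠ 0 := by
    by_contra hcon
    push_neg at hcon
    have hgc : g c c = 0 := by
      have hle : LieSubmodule.lieSpan ℝ L
          {m : L | ∃ (x : (⊤ : LieIdeal ℝ L)) (n : (⊤ : LieSubmodule ℝ L L)),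
            ⁅(x : L), (n : L)⁆ = m} ≤
          ({ LinearMap.ker ((LinearMap.flip g) c) with
             lie_mem := fun {x m} hm => by
               simpa using hcon x m } : LieSubmodule ℝ L L) := by
        rw [LieSubmodule.lieSpan_le]
        rintro m ⟨u, v, rfl⟩
        simpa using hcon (u : L) (v : L)
      simpa using hle hc1
    exact absurd hgc (ne_of_gt (hg.2.1 c hc0))
  -- Bismut form identities
  have hH0 : ∀ A B : L, bismutH J g 0 A B = 0 := by
    intro A B
    simp [bismutH]
  have hHc : ∀ A B : L, bismutH J g A B c = g ⁅A, B⁆ c := by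
    intro A B
    simp only [bismutH, hJJ, hcz, hcz', neg_zero, map_neg, LinearMap.neg_apply, neg_neg]
    simp
  -- the key identity P
  have P : ∀ W X Y : L,
      α W * g ⁅X, Y⁆ c - α X * g ⁅W, Y⁆ c + α Y * g ⁅W, X⁆ c = 0 := by
    intro W X Y
    have h := heq W X Y c
    simp only [dThree, wedgeOneThree, hcz, hH0, hHc, hαc, zero_mul, neg_zero, sub_zero,
      add_zero, zero_sub, zero_add] at h
    have hjac : ⁅⁅X, Y⁆, W⁆ = ⁅⁅W, Y⁆, X⁆ - ⁅⁅W, X⁆, Y⁆ := by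
      have e1 : ⁅W, ⁅X, Y⁆⁆ = ⁅⁅W, X⁆, Y⁆ + ⁅X, ⁅W, Y⁆⁆ := leibniz_lie W X Y
      have e2 : -⁅W, ⁅X, Y⁆⁆ = ⁅⁅X, Y⁆, W⁆ := lie_skew _ _
      have e3 : -⁅X, ⁅W, Y⁆⁆ = ⁅⁅W, Y⁆, X⁆ := lie_skew _ _
      rw [← e2, e1, ← e3]
      abel
    have hg3 : g ⁅⁅X, Y⁆, W⁆ c = g ⁅⁅W, Y⁆, X⁆ c - g ⁅⁅W, X⁆, Y⁆ c := by
      rw [hjac, map_sub, LinearMap.sub_apply]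
    linarith [h, hg3]
  -- endgame
  obtain ⟨x, y, ht⟩ := hex
  have hJxy : ⁅J x, y⁆ = J ⁅x, y⁆ := (hbi x y).symm
  have hxJy : ⁅x, J y⁆ = J ⁅x, y⁆ := hbi' x y
  have hJyx : ⁅J y, x⁆ = -J ⁅x, y⁆ := by
    rw [← hbi y x, ← map_neg, lie_skew]
  have hJyJx : ⁅J y, J x⁆ = ⁅x, y⁆ := by
    rw [hJJ y x, lie_skew]
  have hJxJy : ⁅J x, J y⁆ = -⁅x, y⁆ := hJJ x y
  have hJxx : ⁅J x, x⁆ = 0 := by rw [← hbi x x, lie_self, map_zero]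
  have hJyy : ⁅J y, y⁆ = 0 := by rw [← hbi y y, lie_self, map_zero]
  have E1 := P (J x) x y
  rw [hJxy, hJxx] at E1
  simp only [map_zero, LinearMap.zero_apply, mul_zero, add_zero] at E1
  -- E1 : α (J x) * g ⁅x,y⁆ c - α x * g (J ⁅x,y⁆) c = 0
  have E4 := P (J x) x (J y)
  rw [hxJy, hJxJy, hJxx] at E4
  simp only [map_zero, map_neg, LinearMap.zero_apply, LinearMap.neg_apply,
    mul_zero, add_zero, mul_neg] at E4
  -- E4 : α (J x) * g (J ⁅x,y⁆) c + α x * g ⁅x,y⁆ c = 0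
  have ha' : α (J x) = 0 := by
    have h0 : α (J x) * (g ⁅x, y⁆ c * g ⁅x, y⁆ c + g (J ⁅x, y⁆) c * g (J ⁅x, y⁆) c) = 0 := by
      linear_combination (g ⁅x, y⁆ c) * E1 + (g (J ⁅x, y⁆) c) * E4
    have hpos : g ⁅x, y⁆ c * g ⁅x, y⁆ c + g (J ⁅x, y⁆) c * g (J ⁅x, y⁆) c ≠ 0 := by
      have := mul_self_nonneg (g (J ⁅x, y⁆) c)
      have h2 : 0 < g ⁅x, y⁆ c * g ⁅x, y⁆ c := mul_self_pos.mpr ht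
      nlinarith
    exact (mul_eq_zero.mp h0).resolve_right hpos
  have ha : α x = 0 := by
    have h0 : α x * g ⁅x, y⁆ c = 0 := by
      rw [ha'] at E4
      linarith [E4]
    exact (mul_eq_zero.mp h0).resolve_right ht
  have E3 := P (J y) x y
  rw [hJyy, hJyx, ha] at E3
  simp only [map_zero, map_neg, LinearMap.zero_apply, LinearMap.neg_apply,
    zero_mul, sub_zero, mul_neg] at E3
  -- E3 : α (J y) * g ⁅x,y⁆ c + α y * -(g (J ⁅x,y⁆) c) = 0 (roughly)
  have E2 := P (J y) (J x) y
  rw [hJyy, hJxy, hJyJx, ha'] at E2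
  simp only [map_zero, LinearMap.zero_apply, zero_mul, mul_zero, sub_zero, add_zero] at E2
  -- E2 : α (J y) * g (J ⁅x,y⁆) c + α y * g ⁅x,y⁆ c = 0
  have hb' : α (J y) = 0 := by
    have h0 : α (J y) * (g ⁅x, y⁆ c * g ⁅x, y⁆ c + g (J ⁅x, y⁆) c * g (J ⁅x, y⁆) c) = 0 := by
      linear_combination (g ⁅x, y⁆ c) * E3 + (g (J ⁅x, y⁆) c) * E2
    have hpos : g ⁅x, y⁆ c * g ⁅x, y⁆ c + g (J ⁅x, y⁆) c * g (J ⁅x, y⁆) c ≠ 0 := by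
      have := mul_self_nonneg (g (J ⁅x, y⁆) c)
      have h2 : 0 < g ⁅x, y⁆ c * g ⁅x, y⁆ c := mul_self_pos.mpr ht
      nlinarith
    exact (mul_eq_zero.mp h0).resolve_right hpos
  have hb : α y = 0 := by
    have h0 : α y * g ⁅x, y⁆ c = 0 := by
      rw [hb'] at E2
      linarith [E2]
    exact (mul_eq_zero.mp h0).resolve_right ht
  apply hα0
  ext w
  have hw := P w x y
  rw [ha, hb] at hw
  simp only [zero_mul, sub_zero, add_zero] at hw
  have : α w = 0 := (mul_eq_zero.mp hw).resolve_right ht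
  simpa using this
end

section
/- Let 𝔤(a,v,A) be a Hermitian almost abelian Lie algebra. Then (J,g) is LCSKT if and only if there exists a nonzero closed 1-form α ∈ 𝔤* such that for all X, Y, Z ∈ 𝔫₁: (c1) a·α(e₁) + α(v) = 0 and α(AX) = 0; (c2) α(X)·g(S(A)J₁Y, Z) − α(Y)·g(S(A)J₁X, Z) + α(Z)·g(S(A)J₁Y, X) = 0; and (c3) g(S((a + α(e₂ₙ))A + A² + AᵗA)J₁Y, Z) = ½(g(v,Y)·α(Z) − g(v,Z)·α(Y)). -/
open Module

/-- A Hermitian almost abelian Lie algebra `𝔤(a,v,A)` of dimension `2n ≥ 6`: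
a Hermitian structure `(J,g)` together with an orthogonal decomposition
`𝔤 = ℝe₁ ⊕ 𝔫₁ ⊕ ℝe₂ₙ`, with `𝔫 = ℝe₁ ⊕ 𝔫₁` an abelian ideal of codimension
one, `Je₁ = e₂ₙ`, `J(𝔫₁) ⊆ 𝔫₁`, brackets `[e₂ₙ,e₁] = a•e₁ + v`,
`[e₂ₙ,X] = AX` for `X ∈ 𝔫₁`, where `A` preserves `𝔫₁` and commutes with
`J₁ = J|𝔫₁`, and `At` is the adjoint of `A` on `𝔫₁` with respect to `g`. -/
structure AlmostAbelianHermitian (L : Type*) [LieRing L] [LieAlgebra ℝ L] where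
  J : L →ₗ[ℝ] L
  g : L →ₗ[ℝ] L →ₗ[ℝ] ℝ
  e1 : L
  e2n : L
  n1 : Submodule ℝ L
  a : ℝ
  v : L
  A : L →ₗ[ℝ] L
  At : L →ₗ[ℝ] L
  herm : IsHermitianStructure J g
  hdim : ∃ n : ℕ, 3 ≤ n ∧ Module.finrank ℝ L = 2 * n
  hv : v ∈ n1
  hJe1 : J e1 = e2n
  hJn1 : ∀ x ∈ n1, J x ∈ n1
  hge1 : g e1 e1 = 1
  hge2n : g e2n e2n = 1
  hge1e2n : g e1 e2n = 0
  hge1n1 : ∀ x ∈ n1, g e1 x = 0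
  hge2nn1 : ∀ x ∈ n1, g e2n x = 0
  hspan : ∀ x : L, ∃ (c1 c2 : ℝ), ∃ y ∈ n1, x = c1 • e1 + y + c2 • e2n
  habel1 : ∀ x ∈ n1, ⁅e1, x⁆ = 0
  habel2 : ∀ x ∈ n1, ∀ y ∈ n1, ⁅x, y⁆ = 0
  hbra1 : ⁅e2n, e1⁆ = a • e1 + v
  hbra2 : ∀ x ∈ n1, ⁅e2n, x⁆ = A x
  hAn1 : ∀ x ∈ n1, A x ∈ n1
  hAtn1 : ∀ x ∈ n1, At x ∈ n1
  hAJ : ∀ x ∈ n1, A (J x) = J (A x)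
  hAdj : ∀ x ∈ n1, ∀ y ∈ n1, g (A x) y = g x (At y)

namespace AlmostAbelianHermitian

variable {L : Type*} [LieRing L] [LieAlgebra ℝ L] (D : AlmostAbelianHermitian L)

/-- The symmetric part `S(A) = (A + Aᵗ)/2` of `A`, as a map. -/
noncomputable def SA (x : L) : L := (1/2 : ℝ) • (D.A x + D.At x)

/-- The symmetric part `S(cA + A² + AᵗA)` of `cA + A² + AᵗA`, as a map
(its adjoint being `cAᵗ + (Aᵗ)² + AᵗA`). -/
noncomputable def SM (c : ℝ) (x : L) : L :=
  (1/2 : ℝ) • (c • (D.A x + D.At x) + D.A (D.A x) + D.At (D.At x)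
    + (2 : ℝ) • D.At (D.A x))

/-- The restriction of `A` to an endomorphism of `𝔫₁`. -/
def Arestrict : D.n1 →ₗ[ℝ] D.n1 :=
  D.A.restrict (fun x hx => D.hAn1 x hx)

end AlmostAbelianHermitian

section Aux

open AlmostAbelianHermitian

variable {L : Type*} [LieRing L] [LieAlgebra ℝ L] (D : AlmostAbelianHermitian L)

namespace AABH

lemma gsymm (u w : L) : D.g u w = D.g w u := D.herm.2.1 u w

lemma gJJ (u w : L) : D.g (D.J u) (D.J w) = D.g u w := D.herm.2.2.2 u w

lemma JJ (u : L) : D.J (D.J u) = -u := D.herm.1.1 u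

lemma gJswap (u w : L) : D.g (D.J u) w = -D.g u (D.J w) := by
  have h := gJJ D u (D.J w)
  rw [JJ D w] at h
  rw [← h, map_neg]
  simp

lemma Je2n : D.J D.e2n = -D.e1 := by rw [← D.hJe1, JJ]

lemma br_n1_e1 (x : L) (hx : x ∈ D.n1) : ⁅x, D.e1⁆ = 0 := by
  rw [← neg_eq_zero, lie_skew, D.habel1 x hx]

lemma br_e1_e2n : ⁅D.e1, D.e2n⁆ = -(D.a • D.e1 + D.v) := by
  rw [← lie_skew, D.hbra1]

lemma br_n1_e2n (x : L) (hx : x ∈ D.n1) : ⁅x, D.e2n⁆ = -(D.A x) := by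
  rw [← lie_skew, D.hbra2 x hx]

lemma glie_skew (p q r : L) : D.g ⁅p, q⁆ r = -D.g ⁅q, p⁆ r := by
  rw [← lie_skew, map_neg]
  simp

/-- the 2-form beta(y,z) = g(AJy, z) - g(AJz, y) on n1 -/
noncomputable def bet (y z : L) : ℝ := D.g (D.A (D.J y)) z - D.g (D.A (D.J z)) y

end AABH

end Aux

section Aux2

open AlmostAbelianHermitian AABH

variable {L : Type*} [LieRing L] [LieAlgebra ℝ L] (D : AlmostAbelianHermitian L)

namespace AABH

lemma Hsw12 (X Y Z : L) : bismutH D.J D.g X Y Z = -bismutH D.J D.g Y X Z := by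
  simp only [bismutH]
  linear_combination -glie_skew D (D.J X) (D.J Y) Z - glie_skew D (D.J Y) (D.J Z) X -
    glie_skew D (D.J Z) (D.J X) Y

lemma Hsw23 (X Y Z : L) : bismutH D.J D.g X Y Z = -bismutH D.J D.g X Z Y := by
  simp only [bismutH]
  linear_combination -glie_skew D (D.J X) (D.J Y) Z - glie_skew D (D.J Y) (D.J Z) X -
    glie_skew D (D.J Z) (D.J X) Y

lemma Hzero1 (Y Z : L) : bismutH D.J D.g 0 Y Z = 0 := by
  simp [bismutH]

lemma Hneg1 (X Y Z : L) : bismutH D.J D.g (-X) Y Z = -bismutH D.J D.g X Y Z := by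
  simp only [bismutH, map_neg, neg_lie, lie_neg, LinearMap.neg_apply]
  ring

lemma Hadd1 (U V Y Z : L) :
    bismutH D.J D.g (U + V) Y Z = bismutH D.J D.g U Y Z + bismutH D.J D.g V Y Z := by
  simp only [bismutH, map_add, add_lie, lie_add, LinearMap.add_apply]
  ring

lemma Hsmul1 (c : ℝ) (U Y Z : L) :
    bismutH D.J D.g (c • U) Y Z = c * bismutH D.J D.g U Y Z := by
  simp only [bismutH, map_smul, smul_lie, lie_smul, LinearMap.smul_apply, smul_eq_mul]
  ring

lemma Hn1 (x y z : L) (hx : x ∈ D.n1) (hy : y ∈ D.n1) (hz : z ∈ D.n1) :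
    bismutH D.J D.g x y z = 0 := by
  simp only [bismutH]
  rw [D.habel2 _ (D.hJn1 x hx) _ (D.hJn1 y hy), D.habel2 _ (D.hJn1 y hy) _ (D.hJn1 z hz),
    D.habel2 _ (D.hJn1 z hz) _ (D.hJn1 x hx)]
  simp

lemma He1n1 (y z : L) (hy : y ∈ D.n1) (hz : z ∈ D.n1) :
    bismutH D.J D.g D.e1 y z = -bet D y z := by
  simp only [bismutH, bet, D.hJe1]
  rw [D.hbra2 _ (D.hJn1 y hy), D.habel2 _ (D.hJn1 y hy) _ (D.hJn1 z hz),
    br_n1_e2n D _ (D.hJn1 z hz)]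
  simp only [map_zero, map_neg, LinearMap.zero_apply, LinearMap.neg_apply]
  ring

lemma He2nn1 (y z : L) (hy : y ∈ D.n1) (hz : z ∈ D.n1) :
    bismutH D.J D.g D.e2n y z = 0 := by
  simp only [bismutH, Je2n]
  rw [neg_lie, D.habel1 _ (D.hJn1 y hy), D.habel2 _ (D.hJn1 y hy) _ (D.hJn1 z hz),
    lie_neg, br_n1_e1 D _ (D.hJn1 z hz)]
  simp

lemma He1e2n (z : L) (hz : z ∈ D.n1) :
    bismutH D.J D.g D.e1 D.e2n z = D.g D.v z := by
  simp only [bismutH, D.hJe1, Je2n]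
  rw [lie_neg, D.hbra1, neg_lie, D.habel1 _ (D.hJn1 z hz), br_n1_e2n D _ (D.hJn1 z hz)]
  simp only [map_neg, map_add, map_smul, LinearMap.neg_apply, LinearMap.add_apply,
    LinearMap.smul_apply, map_zero, LinearMap.zero_apply, smul_eq_mul]
  rw [D.hge1n1 z hz]
  rw [gsymm D (D.A (D.J z)) D.e2n, D.hge2nn1 _ (D.hAn1 _ (D.hJn1 z hz))]
  ring

end AABH

end Aux2

section Aux3

open AlmostAbelianHermitian AABH

variable {L : Type*} [LieRing L] [LieAlgebra ℝ L] (D : AlmostAbelianHermitian L)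

namespace AABH

/-- difference between dH and α ∧ H -/
noncomputable def FF (α : Module.Dual ℝ L) (W X Y Z : L) : ℝ :=
  dThree (bismutH D.J D.g) W X Y Z - wedgeOneThree α (bismutH D.J D.g) W X Y Z

variable (α : Module.Dual ℝ L)

lemma Fadd1 (U V X Y Z : L) :
    FF D α (U + V) X Y Z = FF D α U X Y Z + FF D α V X Y Z := by
  simp only [FF, dThree, wedgeOneThree, bismutH, map_add, add_lie, lie_add,
    LinearMap.add_apply]
  ring

lemma Fadd2 (W U V Y Z : L) :
    FF D α W (U + V) Y Z = FF D α W U Y Z + FF D α W V Y Z := by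
  simp only [FF, dThree, wedgeOneThree, bismutH, map_add, add_lie, lie_add,
    LinearMap.add_apply]
  ring

lemma Fadd3 (W X U V Z : L) :
    FF D α W X (U + V) Z = FF D α W X U Z + FF D α W X V Z := by
  simp only [FF, dThree, wedgeOneThree, bismutH, map_add, add_lie, lie_add,
    LinearMap.add_apply]
  ring

lemma Fadd4 (W X Y U V : L) :
    FF D α W X Y (U + V) = FF D α W X Y U + FF D α W X Y V := by
  simp only [FF, dThree, wedgeOneThree, bismutH, map_add, add_lie, lie_add,
    LinearMap.add_apply]
  ring

lemma Fsmul1 (c : ℝ) (U X Y Z : L) : FF D α (c • U) X Y Z = c * FF D α U X Y Z := by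
  simp only [FF, dThree, wedgeOneThree, bismutH, map_smul, smul_lie, lie_smul,
    LinearMap.smul_apply, smul_eq_mul]
  ring

lemma Fsmul2 (c : ℝ) (W U Y Z : L) : FF D α W (c • U) Y Z = c * FF D α W U Y Z := by
  simp only [FF, dThree, wedgeOneThree, bismutH, map_smul, smul_lie, lie_smul,
    LinearMap.smul_apply, smul_eq_mul]
  ring

lemma Fsmul3 (c : ℝ) (W X U Z : L) : FF D α W X (c • U) Z = c * FF D α W X U Z := by
  simp only [FF, dThree, wedgeOneThree, bismutH, map_smul, smul_lie, lie_smul,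
    LinearMap.smul_apply, smul_eq_mul]
  ring

lemma Fsmul4 (c : ℝ) (W X Y U : L) : FF D α W X Y (c • U) = c * FF D α W X Y U := by
  simp only [FF, dThree, wedgeOneThree, bismutH, map_smul, smul_lie, lie_smul,
    LinearMap.smul_apply, smul_eq_mul]
  ring

lemma Hlieskew (p q Y Z : L) :
    bismutH D.J D.g ⁅p, q⁆ Y Z = -bismutH D.J D.g ⁅q, p⁆ Y Z := by
  rw [← lie_skew p q, Hneg1]

lemma dsw12 (W X Y Z : L) :
    dThree (bismutH D.J D.g) W X Y Z = -dThree (bismutH D.J D.g) X W Y Z := by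
  simp only [dThree]
  linear_combination -Hlieskew D X W Y Z - Hsw23 D ⁅Y, Z⁆ W X

lemma dsw23 (W X Y Z : L) :
    dThree (bismutH D.J D.g) W X Y Z = -dThree (bismutH D.J D.g) W Y X Z := by
  simp only [dThree]
  linear_combination -Hsw23 D ⁅W, Z⁆ X Y - Hlieskew D Y X W Z

lemma dsw34 (W X Y Z : L) :
    dThree (bismutH D.J D.g) W X Y Z = -dThree (bismutH D.J D.g) W X Z Y := by
  simp only [dThree]
  linear_combination -Hsw23 D ⁅W, X⁆ Y Z - Hlieskew D Z Y W X

lemma wsw12 (W X Y Z : L) :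
    wedgeOneThree α (bismutH D.J D.g) W X Y Z
      = -wedgeOneThree α (bismutH D.J D.g) X W Y Z := by
  simp only [wedgeOneThree]
  linear_combination α Y * Hsw12 D W X Z - α Z * Hsw12 D W X Y

lemma wsw23 (W X Y Z : L) :
    wedgeOneThree α (bismutH D.J D.g) W X Y Z
      = -wedgeOneThree α (bismutH D.J D.g) W Y X Z := by
  simp only [wedgeOneThree]
  linear_combination α W * Hsw12 D X Y Z - α Z * Hsw23 D W X Y

lemma wsw34 (W X Y Z : L) :
    wedgeOneThree α (bismutH D.J D.g) W X Y Z
      = -wedgeOneThree α (bismutH D.J D.g) W X Z Y := by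
  simp only [wedgeOneThree]
  linear_combination α W * Hsw23 D X Y Z - α X * Hsw23 D W Y Z

lemma Fsw12 (W X Y Z : L) : FF D α W X Y Z = -FF D α X W Y Z := by
  simp only [FF]
  linear_combination dsw12 D W X Y Z - wsw12 D α W X Y Z

lemma Fsw23 (W X Y Z : L) : FF D α W X Y Z = -FF D α W Y X Z := by
  simp only [FF]
  linear_combination dsw23 D W X Y Z - wsw23 D α W X Y Z

lemma Fsw34 (W X Y Z : L) : FF D α W X Y Z = -FF D α W X Z Y := by
  simp only [FF]
  linear_combination dsw34 D W X Y Z - wsw34 D α W X Y Z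

lemma Frep12 (W Y Z : L) : FF D α W W Y Z = 0 := by
  have h := Fsw12 D α W W Y Z; linarith

lemma Frep23 (W X Z : L) : FF D α W X X Z = 0 := by
  have h := Fsw23 D α W X X Z; linarith

lemma Frep34 (W X Y : L) : FF D α W X Y Y = 0 := by
  have h := Fsw34 D α W X Y Y; linarith

/-- reduction of a linear scalar function vanishing on generators -/
lemma red (P : L → ℝ) (hadd : ∀ U V : L, P (U + V) = P U + P V)
    (hsmul : ∀ (c : ℝ) (U : L), P (c • U) = c * P U)
    (h1 : P D.e1 = 0) (h2 : P D.e2n = 0) (h3 : ∀ w ∈ D.n1, P w = 0) :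
    ∀ W : L, P W = 0 := by
  intro W
  obtain ⟨c1, c2, y, hy, rfl⟩ := D.hspan W
  rw [hadd, hadd, hsmul, hsmul, h1, h2, h3 y hy]
  ring

end AABH

end Aux3

section Aux4

open AlmostAbelianHermitian AABH

variable {L : Type*} [LieRing L] [LieAlgebra ℝ L] (D : AlmostAbelianHermitian L)

namespace AABH

lemma gJswap' (u w : L) : D.g u (D.J w) = -D.g (D.J u) w := by
  have h := gJswap D u w; linarith

variable (α : Module.Dual ℝ L)

lemma Fn1 (w x y z : L) (hw : w ∈ D.n1) (hx : x ∈ D.n1) (hy : y ∈ D.n1) (hz : z ∈ D.n1) :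
    FF D α w x y z = 0 := by
  simp only [FF, dThree, wedgeOneThree]
  rw [D.habel2 w hw x hx, D.habel2 w hw y hy, D.habel2 w hw z hz, D.habel2 x hx y hy,
    D.habel2 x hx z hz, D.habel2 y hy z hz]
  simp only [Hzero1, Hn1 D x y z hx hy hz, Hn1 D w y z hw hy hz, Hn1 D w x z hw hx hz,
    Hn1 D w x y hw hx hy]
  ring

lemma Fe2n (x y z : L) (hx : x ∈ D.n1) (hy : y ∈ D.n1) (hz : z ∈ D.n1) :
    FF D α D.e2n x y z = 0 := by
  simp only [FF, dThree, wedgeOneThree]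
  rw [D.hbra2 x hx, D.hbra2 y hy, D.hbra2 z hz, D.habel2 x hx y hy, D.habel2 x hx z hz,
    D.habel2 y hy z hz]
  simp only [Hzero1, Hn1 D (D.A x) y z (D.hAn1 x hx) hy hz,
    Hn1 D (D.A y) x z (D.hAn1 y hy) hx hz, Hn1 D (D.A z) x y (D.hAn1 z hz) hx hy,
    Hn1 D x y z hx hy hz, He2nn1 D y z hy hz, He2nn1 D x z hx hz, He2nn1 D x y hx hy]
  ring

lemma Fval1 (x y z : L) (hx : x ∈ D.n1) (hy : y ∈ D.n1) (hz : z ∈ D.n1) :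
    FF D α D.e1 x y z
      = -(α x * bet D y z - α y * bet D x z + α z * bet D x y) := by
  simp only [FF, dThree, wedgeOneThree]
  rw [D.habel1 x hx, D.habel1 y hy, D.habel1 z hz, D.habel2 x hx y hy, D.habel2 x hx z hz,
    D.habel2 y hy z hz]
  simp only [Hzero1, Hn1 D x y z hx hy hz, He1n1 D y z hy hz, He1n1 D x z hx hz,
    He1n1 D x y hx hy]
  ring

lemma Fval2 (y z : L) (hy : y ∈ D.n1) (hz : z ∈ D.n1) :
    FF D α D.e1 D.e2n y z
      = (-D.a * bet D y z - bet D (D.A y) z + bet D (D.A z) y)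
        - (α D.e2n * bet D y z + α y * D.g D.v z - α z * D.g D.v y) := by
  simp only [FF, dThree, wedgeOneThree]
  rw [br_e1_e2n D, D.habel1 y hy, D.habel1 z hz, D.hbra2 y hy, D.hbra2 z hz,
    D.habel2 y hy z hz]
  rw [Hneg1, Hadd1, Hsmul1]
  simp only [Hzero1, He1n1 D y z hy hz, Hn1 D D.v y z D.hv hy hz,
    Hsw12 D (D.A y) D.e1 z, He1n1 D (D.A y) z (D.hAn1 y hy) hz,
    Hsw12 D (D.A z) D.e1 y, He1n1 D (D.A z) y (D.hAn1 z hz) hy,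
    He2nn1 D y z hy hz, He1e2n D z hz, He1e2n D y hy]
  ring

lemma gAtJ (y z : L) (hy : y ∈ D.n1) (hz : z ∈ D.n1) :
    D.g (D.At (D.J y)) z = -D.g (D.A (D.J z)) y := by
  rw [gsymm D (D.At (D.J y)) z, ← D.hAdj z hz (D.J y) (D.hJn1 y hy),
    gJswap' D (D.A z) y, ← D.hAJ z hz]

lemma gAtAt (y z : L) (hy : y ∈ D.n1) (hz : z ∈ D.n1) :
    D.g (D.At (D.At (D.J y))) z = -D.g (D.A (D.A (D.J z))) y := by
  rw [gsymm D _ z, ← D.hAdj z hz _ (D.hAtn1 _ (D.hJn1 y hy)),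
    ← D.hAdj (D.A z) (D.hAn1 z hz) _ (D.hJn1 y hy),
    gJswap' D (D.A (D.A z)) y, ← D.hAJ (D.A z) (D.hAn1 z hz), ← D.hAJ z hz]

lemma gAtA (y z : L) (hy : y ∈ D.n1) (hz : z ∈ D.n1) :
    D.g (D.At (D.A (D.J y))) z = D.g (D.A (D.J y)) (D.A z) := by
  rw [gsymm D _ z, ← D.hAdj z hz _ (D.hAn1 _ (D.hJn1 y hy)), gsymm D (D.A z) _]

lemma gAAskew (y z : L) (hy : y ∈ D.n1) (hz : z ∈ D.n1) :
    D.g (D.A (D.J y)) (D.A z) = -D.g (D.A (D.J z)) (D.A y) := by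
  rw [D.hAJ y hy, gJswap D (D.A y) (D.A z), ← D.hAJ z hz,
    gsymm D (D.A y) (D.A (D.J z))]

lemma twoSA (y z : L) (hy : y ∈ D.n1) (hz : z ∈ D.n1) :
    2 * D.g (D.SA (D.J y)) z = bet D y z := by
  simp only [SA, map_smul, map_add, LinearMap.smul_apply, LinearMap.add_apply,
    smul_eq_mul, bet]
  rw [gAtJ D y z hy hz]
  ring

lemma twoSM (c : ℝ) (y z : L) (hy : y ∈ D.n1) (hz : z ∈ D.n1) :
    2 * D.g (D.SM c (D.J y)) z
      = c * bet D y z + bet D (D.A y) z - bet D (D.A z) y := by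
  simp only [SM, map_smul, map_add, LinearMap.smul_apply, LinearMap.add_apply,
    smul_eq_mul, bet]
  rw [gAtJ D y z hy hz, gAtAt D y z hy hz, ← D.hAJ y hy, ← D.hAJ z hz]
  have h3 := gAtA D y z hy hz
  have h4 := gAAskew D y z hy hz
  linear_combination 2 * h3 + h4

end AABH

end Aux4

section Aux5

open AlmostAbelianHermitian AABH

variable {L : Type*} [LieRing L] [LieAlgebra ℝ L] (D : AlmostAbelianHermitian L)

namespace AABH

lemma betskew (y z : L) : bet D y z = -bet D z y := by
  simp only [bet]; ring

lemma betJ (y z : L) (hy : y ∈ D.n1) (hz : z ∈ D.n1) :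
    bet D (D.J y) (D.J z) = bet D y z := by
  simp only [bet, JJ, map_neg, LinearMap.neg_apply]
  rw [gJswap' D (D.A y) z, gJswap' D (D.A z) y, ← D.hAJ y hy, ← D.hAJ z hz]
  ring

lemma gxJx (x : L) : D.g x (D.J x) = 0 := by
  have h1 := gJswap' D x x
  have h2 := gsymm D (D.J x) x
  linarith

lemma exists_dual (α : Module.Dual ℝ L) : ∃ u ∈ D.n1, ∀ x ∈ D.n1, α x = D.g u x := by
  have hfd : FiniteDimensional ℝ L := by
    obtain ⟨n, hn, hfr⟩ := D.hdim
    exact FiniteDimensional.of_finrank_pos (by omega)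
  let Φ : D.n1 →ₗ[ℝ] Module.Dual ℝ D.n1 :=
    { toFun := fun u => (D.g u.1).comp D.n1.subtype
      map_add' := by intro u v; ext x; simp
      map_smul' := by intro c u; ext x; simp }
  have hinj : Function.Injective Φ := by
    refine (injective_iff_map_eq_zero Φ).2 ?_
    intro u hu
    by_contra hne
    have h1 : D.g u.1 u.1 = 0 := by
      have := congrArg (fun f => f u) hu
      simpa [Φ] using this
    have h2 : (0 : ℝ) < D.g u.1 u.1 :=
      D.herm.2.2.1 u.1 (fun h => hne (Subtype.ext h))
    linarith
  have hsur : Function.Surjective Φ :=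
    (LinearMap.injective_iff_surjective_of_finrank_eq_finrank
      (Subspace.dual_finrank_eq).symm).1 hinj
  obtain ⟨u, hu⟩ := hsur (α.comp D.n1.subtype)
  refine ⟨u.1, u.2, fun x hx => ?_⟩
  have := congrArg (fun f => f ⟨x, hx⟩) hu
  simpa [Φ] using this.symm

/-- From condition (c2) derive the wedge-form condition. -/
lemma Cw_of_c2 (α : Module.Dual ℝ L)
    (hc2 : ∀ x ∈ D.n1, ∀ y ∈ D.n1, ∀ z ∈ D.n1,
      α x * D.g (D.SA (D.J y)) z - α y * D.g (D.SA (D.J x)) z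
        + α z * D.g (D.SA (D.J y)) x = 0) :
    ∀ x ∈ D.n1, ∀ y ∈ D.n1, ∀ z ∈ D.n1,
      α x * bet D y z - α y * bet D x z + α z * bet D x y = 0 := by
  have hC' : ∀ x ∈ D.n1, ∀ y ∈ D.n1, ∀ z ∈ D.n1,
      α x * bet D y z - α y * bet D x z - α z * bet D x y = 0 := by
    intro x hx y hy z hz
    have h := hc2 x hx y hy z hz
    have e1 := twoSA D y z hy hz
    have e2 := twoSA D x z hx hz
    have e3 := twoSA D y x hy hx
    have s := betskew D x y
    linear_combination 2 * h - α x * e1 + α y * e2 - α z * e3 - α z * s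
  by_cases hall : ∀ x ∈ D.n1, α x = 0
  · intro x hx y hy z hz
    rw [hall x hx, hall y hy, hall z hz]; ring
  · push_neg at hall
    obtain ⟨u0, hu0, hau0⟩ := hall
    have R : ∀ x ∈ D.n1, ∀ y ∈ D.n1, ∀ z ∈ D.n1,
        α y * bet D x z + α z * bet D x y = 0 := by
      intro x hx y hy z hz
      have h1 := hC' x hx y hy z hz
      have h2 := hC' x hx z hz y hy
      have s1 := betskew D y z
      linear_combination -(1/2) * h1 - (1/2) * h2 + (1/2) * α x * s1
    have hbu : ∀ x ∈ D.n1, bet D x u0 = 0 := by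
      intro x hx
      have h := R x hx u0 hu0 u0 hu0
      have h2 : α u0 * bet D x u0 = 0 := by linarith
      exact (mul_eq_zero.mp h2).resolve_left hau0
    have hb : ∀ x ∈ D.n1, ∀ y ∈ D.n1, bet D x y = 0 := by
      intro x hx y hy
      have hr := R x hx y hy u0 hu0
      rw [hbu x hx] at hr
      have h2 : α u0 * bet D x y = 0 := by linarith
      exact (mul_eq_zero.mp h2).resolve_left hau0
    intro x hx y hy z hz
    rw [hb y hy z hz, hb x hx z hz, hb x hx y hy]; ring

/-- From the wedge-form condition and closedness derive condition (c2). -/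
lemma c2_of_Cw (α : Module.Dual ℝ L) (hcl : IsClosedOneForm α)
    (hC : ∀ x ∈ D.n1, ∀ y ∈ D.n1, ∀ z ∈ D.n1,
      α x * bet D y z - α y * bet D x z + α z * bet D x y = 0) :
    ∀ x ∈ D.n1, ∀ y ∈ D.n1, ∀ z ∈ D.n1,
      α x * D.g (D.SA (D.J y)) z - α y * D.g (D.SA (D.J x)) z
        + α z * D.g (D.SA (D.J y)) x = 0 := by
  obtain ⟨u, hu, hαu⟩ := exists_dual D α
  by_cases hu0 : u = 0
  · have hz' : ∀ x ∈ D.n1, α x = 0 := by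
      intro x hx; rw [hαu x hx, hu0]; simp
    intro x hx y hy z hz
    rw [hz' x hx, hz' y hy, hz' z hz]; ring
  · have hguu : 0 < D.g u u := D.herm.2.2.1 u hu0
    have hAu : D.g (D.A u) u = 0 := by
      have hcl' := hcl D.e2n u
      rw [D.hbra2 u hu] at hcl'
      rw [hαu (D.A u) (D.hAn1 u hu)] at hcl'
      rw [gsymm D (D.A u) u]
      exact hcl'
    have s1 : bet D (D.J u) u = 0 := by
      simp only [bet, JJ, map_neg, LinearMap.neg_apply]
      rw [D.hAJ u hu, gJJ D (D.A u) u]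
      linarith
    have dag : ∀ y ∈ D.n1, ∀ z ∈ D.n1,
        D.g u u * bet D y z = α y * bet D u z - α z * bet D u y := by
      intro y hy z hz
      have h := hC u hu y hy z hz
      rw [hαu u hu] at h
      linarith
    have huu0 : bet D u u = 0 := by simp only [bet]; ring
    have s2 : bet D u (D.J u) = 0 := by
      have h := dag (D.J u) (D.hJn1 u hu) u hu
      rw [s1, hαu (D.J u) (D.hJn1 u hu), gxJx D u] at h
      have h2 : α u * bet D u (D.J u) = 0 := by linarith
      rw [hαu u hu] at h2
      exact (mul_eq_zero.mp h2).resolve_left (ne_of_gt hguu)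
    have s3 : ∀ z ∈ D.n1, bet D u z = 0 := by
      intro z hz
      have h := dag (D.J u) (D.hJn1 u hu) (D.J z) (D.hJn1 z hz)
      rw [betJ D u z hu hz, hαu (D.J u) (D.hJn1 u hu), gxJx D u, s2] at h
      have : D.g u u * bet D u z = 0 := by linarith
      exact (mul_eq_zero.mp this).resolve_left (ne_of_gt hguu)
    have s4 : ∀ y ∈ D.n1, ∀ z ∈ D.n1, bet D y z = 0 := by
      intro y hy z hz
      have h := dag y hy z hz
      rw [s3 y hy, s3 z hz] at h
      have : D.g u u * bet D y z = 0 := by linarith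
      exact (mul_eq_zero.mp this).resolve_left (ne_of_gt hguu)
    intro x hx y hy z hz
    have e1 := twoSA D y z hy hz
    have e2 := twoSA D x z hx hz
    have e3 := twoSA D y x hy hx
    rw [s4 y hy z hz] at e1
    rw [s4 x hx z hz] at e2
    rw [s4 y hy x hx] at e3
    have q1 : D.g (D.SA (D.J y)) z = 0 := by linarith
    have q2 : D.g (D.SA (D.J x)) z = 0 := by linarith
    have q3 : D.g (D.SA (D.J y)) x = 0 := by linarith
    rw [q1, q2, q3]; ring

end AABH

end Aux5

section Aux6

open AlmostAbelianHermitian AABH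

variable {L : Type*} [LieRing L] [LieAlgebra ℝ L] (D : AlmostAbelianHermitian L)

namespace AABH

lemma master (α : Module.Dual ℝ L)
    (hL1 : ∀ y ∈ D.n1, ∀ z ∈ D.n1, FF D α D.e1 D.e2n y z = 0)
    (hL2 : ∀ x ∈ D.n1, ∀ y ∈ D.n1, ∀ z ∈ D.n1, FF D α D.e1 x y z = 0) :
    ∀ W X Y Z : L, FF D α W X Y Z = 0 := by
  have h1111 : FF D α D.e1 D.e1 D.e1 D.e1 = 0 := by
    exact Frep12 D α D.e1 D.e1 D.e1
  have h1112 : FF D α D.e1 D.e1 D.e1 D.e2n = 0 := by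
    exact Frep12 D α D.e1 D.e1 D.e2n
  have h1113 : ∀ w4 ∈ D.n1, FF D α D.e1 D.e1 D.e1 w4 = 0 := by
    intro w4 hw4
    exact Frep12 D α D.e1 D.e1 w4
  have h1121 : FF D α D.e1 D.e1 D.e2n D.e1 = 0 := by
    rw [Fsw34 D α]
    simp only [neg_neg, neg_eq_zero]
    exact Frep12 D α D.e1 D.e1 D.e2n
  have h1122 : FF D α D.e1 D.e1 D.e2n D.e2n = 0 := by
    exact Frep12 D α D.e1 D.e2n D.e2n
  have h1123 : ∀ w4 ∈ D.n1, FF D α D.e1 D.e1 D.e2n w4 = 0 := by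
    intro w4 hw4
    exact Frep12 D α D.e1 D.e2n w4
  have h1131 : ∀ w3 ∈ D.n1, FF D α D.e1 D.e1 w3 D.e1 = 0 := by
    intro w3 hw3
    rw [Fsw34 D α]
    simp only [neg_neg, neg_eq_zero]
    exact Frep12 D α D.e1 D.e1 w3
  have h1132 : ∀ w3 ∈ D.n1, FF D α D.e1 D.e1 w3 D.e2n = 0 := by
    intro w3 hw3
    rw [Fsw34 D α]
    simp only [neg_neg, neg_eq_zero]
    exact Frep12 D α D.e1 D.e2n w3
  have h1133 : ∀ w3 ∈ D.n1, ∀ w4 ∈ D.n1, FF D α D.e1 D.e1 w3 w4 = 0 := by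
    intro w3 hw3 w4 hw4
    exact Frep12 D α D.e1 w3 w4
  have h1211 : FF D α D.e1 D.e2n D.e1 D.e1 = 0 := by
    rw [Fsw23 D α]
    rw [Fsw34 D α]
    simp only [neg_neg, neg_eq_zero]
    exact Frep12 D α D.e1 D.e1 D.e2n
  have h1212 : FF D α D.e1 D.e2n D.e1 D.e2n = 0 := by
    rw [Fsw23 D α]
    simp only [neg_neg, neg_eq_zero]
    exact Frep12 D α D.e1 D.e2n D.e2n
  have h1213 : ∀ w4 ∈ D.n1, FF D α D.e1 D.e2n D.e1 w4 = 0 := by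
    intro w4 hw4
    rw [Fsw23 D α]
    simp only [neg_neg, neg_eq_zero]
    exact Frep12 D α D.e1 D.e2n w4
  have h1221 : FF D α D.e1 D.e2n D.e2n D.e1 = 0 := by
    rw [Fsw34 D α]
    rw [Fsw23 D α]
    simp only [neg_neg, neg_eq_zero]
    exact Frep12 D α D.e1 D.e2n D.e2n
  have h1222 : FF D α D.e1 D.e2n D.e2n D.e2n = 0 := by
    exact Frep23 D α D.e1 D.e2n D.e2n
  have h1223 : ∀ w4 ∈ D.n1, FF D α D.e1 D.e2n D.e2n w4 = 0 := by
    intro w4 hw4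
    exact Frep23 D α D.e1 D.e2n w4
  have h1231 : ∀ w3 ∈ D.n1, FF D α D.e1 D.e2n w3 D.e1 = 0 := by
    intro w3 hw3
    rw [Fsw34 D α]
    rw [Fsw23 D α]
    simp only [neg_neg, neg_eq_zero]
    exact Frep12 D α D.e1 D.e2n w3
  have h1232 : ∀ w3 ∈ D.n1, FF D α D.e1 D.e2n w3 D.e2n = 0 := by
    intro w3 hw3
    rw [Fsw34 D α]
    simp only [neg_neg, neg_eq_zero]
    exact Frep23 D α D.e1 D.e2n w3
  have h1233 : ∀ w3 ∈ D.n1, ∀ w4 ∈ D.n1, FF D α D.e1 D.e2n w3 w4 = 0 := by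
    intro w3 hw3 w4 hw4
    exact hL1 w3 hw3 w4 hw4
  have h1311 : ∀ w2 ∈ D.n1, FF D α D.e1 w2 D.e1 D.e1 = 0 := by
    intro w2 hw2
    rw [Fsw23 D α]
    rw [Fsw34 D α]
    simp only [neg_neg, neg_eq_zero]
    exact Frep12 D α D.e1 D.e1 w2
  have h1312 : ∀ w2 ∈ D.n1, FF D α D.e1 w2 D.e1 D.e2n = 0 := by
    intro w2 hw2
    rw [Fsw23 D α]
    rw [Fsw34 D α]
    simp only [neg_neg, neg_eq_zero]
    exact Frep12 D α D.e1 D.e2n w2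
  have h1313 : ∀ w2 ∈ D.n1, ∀ w4 ∈ D.n1, FF D α D.e1 w2 D.e1 w4 = 0 := by
    intro w2 hw2 w4 hw4
    rw [Fsw23 D α]
    simp only [neg_neg, neg_eq_zero]
    exact Frep12 D α D.e1 w2 w4
  have h1321 : ∀ w2 ∈ D.n1, FF D α D.e1 w2 D.e2n D.e1 = 0 := by
    intro w2 hw2
    rw [Fsw23 D α]
    rw [Fsw34 D α]
    rw [Fsw23 D α]
    simp only [neg_neg, neg_eq_zero]
    exact Frep12 D α D.e1 D.e2n w2
  have h1322 : ∀ w2 ∈ D.n1, FF D α D.e1 w2 D.e2n D.e2n = 0 := by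
    intro w2 hw2
    rw [Fsw23 D α]
    rw [Fsw34 D α]
    simp only [neg_neg, neg_eq_zero]
    exact Frep23 D α D.e1 D.e2n w2
  have h1323 : ∀ w2 ∈ D.n1, ∀ w4 ∈ D.n1, FF D α D.e1 w2 D.e2n w4 = 0 := by
    intro w2 hw2 w4 hw4
    rw [Fsw23 D α]
    simp only [neg_neg, neg_eq_zero]
    exact hL1 w2 hw2 w4 hw4
  have h1331 : ∀ w2 ∈ D.n1, ∀ w3 ∈ D.n1, FF D α D.e1 w2 w3 D.e1 = 0 := by
    intro w2 hw2 w3 hw3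
    rw [Fsw34 D α]
    rw [Fsw23 D α]
    simp only [neg_neg, neg_eq_zero]
    exact Frep12 D α D.e1 w2 w3
  have h1332 : ∀ w2 ∈ D.n1, ∀ w3 ∈ D.n1, FF D α D.e1 w2 w3 D.e2n = 0 := by
    intro w2 hw2 w3 hw3
    rw [Fsw34 D α]
    rw [Fsw23 D α]
    simp only [neg_neg, neg_eq_zero]
    exact hL1 w2 hw2 w3 hw3
  have h1333 : ∀ w2 ∈ D.n1, ∀ w3 ∈ D.n1, ∀ w4 ∈ D.n1, FF D α D.e1 w2 w3 w4 = 0 := by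
    intro w2 hw2 w3 hw3 w4 hw4
    exact hL2 w2 hw2 w3 hw3 w4 hw4
  have h2111 : FF D α D.e2n D.e1 D.e1 D.e1 = 0 := by
    rw [Fsw12 D α]
    rw [Fsw23 D α]
    rw [Fsw34 D α]
    simp only [neg_neg, neg_eq_zero]
    exact Frep12 D α D.e1 D.e1 D.e2n
  have h2112 : FF D α D.e2n D.e1 D.e1 D.e2n = 0 := by
    rw [Fsw12 D α]
    rw [Fsw23 D α]
    simp only [neg_neg, neg_eq_zero]
    exact Frep12 D α D.e1 D.e2n D.e2n
  have h2113 : ∀ w4 ∈ D.n1, FF D α D.e2n D.e1 D.e1 w4 = 0 := by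
    intro w4 hw4
    rw [Fsw12 D α]
    rw [Fsw23 D α]
    simp only [neg_neg, neg_eq_zero]
    exact Frep12 D α D.e1 D.e2n w4
  have h2121 : FF D α D.e2n D.e1 D.e2n D.e1 = 0 := by
    rw [Fsw12 D α]
    rw [Fsw34 D α]
    rw [Fsw23 D α]
    simp only [neg_neg, neg_eq_zero]
    exact Frep12 D α D.e1 D.e2n D.e2n
  have h2122 : FF D α D.e2n D.e1 D.e2n D.e2n = 0 := by
    rw [Fsw12 D α]
    simp only [neg_neg, neg_eq_zero]
    exact Frep23 D α D.e1 D.e2n D.e2n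
  have h2123 : ∀ w4 ∈ D.n1, FF D α D.e2n D.e1 D.e2n w4 = 0 := by
    intro w4 hw4
    rw [Fsw12 D α]
    simp only [neg_neg, neg_eq_zero]
    exact Frep23 D α D.e1 D.e2n w4
  have h2131 : ∀ w3 ∈ D.n1, FF D α D.e2n D.e1 w3 D.e1 = 0 := by
    intro w3 hw3
    rw [Fsw12 D α]
    rw [Fsw34 D α]
    rw [Fsw23 D α]
    simp only [neg_neg, neg_eq_zero]
    exact Frep12 D α D.e1 D.e2n w3
  have h2132 : ∀ w3 ∈ D.n1, FF D α D.e2n D.e1 w3 D.e2n = 0 := by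
    intro w3 hw3
    rw [Fsw12 D α]
    rw [Fsw34 D α]
    simp only [neg_neg, neg_eq_zero]
    exact Frep23 D α D.e1 D.e2n w3
  have h2133 : ∀ w3 ∈ D.n1, ∀ w4 ∈ D.n1, FF D α D.e2n D.e1 w3 w4 = 0 := by
    intro w3 hw3 w4 hw4
    rw [Fsw12 D α]
    simp only [neg_neg, neg_eq_zero]
    exact hL1 w3 hw3 w4 hw4
  have h2211 : FF D α D.e2n D.e2n D.e1 D.e1 = 0 := by
    rw [Fsw23 D α]
    rw [Fsw34 D α]
    rw [Fsw12 D α]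
    rw [Fsw23 D α]
    simp only [neg_neg, neg_eq_zero]
    exact Frep12 D α D.e1 D.e2n D.e2n
  have h2212 : FF D α D.e2n D.e2n D.e1 D.e2n = 0 := by
    rw [Fsw23 D α]
    rw [Fsw12 D α]
    simp only [neg_neg, neg_eq_zero]
    exact Frep23 D α D.e1 D.e2n D.e2n
  have h2213 : ∀ w4 ∈ D.n1, FF D α D.e2n D.e2n D.e1 w4 = 0 := by
    intro w4 hw4
    rw [Fsw23 D α]
    rw [Fsw12 D α]
    simp only [neg_neg, neg_eq_zero]
    exact Frep23 D α D.e1 D.e2n w4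
  have h2221 : FF D α D.e2n D.e2n D.e2n D.e1 = 0 := by
    rw [Fsw34 D α]
    rw [Fsw23 D α]
    rw [Fsw12 D α]
    simp only [neg_neg, neg_eq_zero]
    exact Frep23 D α D.e1 D.e2n D.e2n
  have h2222 : FF D α D.e2n D.e2n D.e2n D.e2n = 0 := by
    exact Frep12 D α D.e2n D.e2n D.e2n
  have h2223 : ∀ w4 ∈ D.n1, FF D α D.e2n D.e2n D.e2n w4 = 0 := by
    intro w4 hw4
    exact Frep12 D α D.e2n D.e2n w4
  have h2231 : ∀ w3 ∈ D.n1, FF D α D.e2n D.e2n w3 D.e1 = 0 := by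
    intro w3 hw3
    rw [Fsw34 D α]
    rw [Fsw23 D α]
    rw [Fsw12 D α]
    simp only [neg_neg, neg_eq_zero]
    exact Frep23 D α D.e1 D.e2n w3
  have h2232 : ∀ w3 ∈ D.n1, FF D α D.e2n D.e2n w3 D.e2n = 0 := by
    intro w3 hw3
    rw [Fsw34 D α]
    simp only [neg_neg, neg_eq_zero]
    exact Frep12 D α D.e2n D.e2n w3
  have h2233 : ∀ w3 ∈ D.n1, ∀ w4 ∈ D.n1, FF D α D.e2n D.e2n w3 w4 = 0 := by
    intro w3 hw3 w4 hw4
    exact Frep12 D α D.e2n w3 w4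
  have h2311 : ∀ w2 ∈ D.n1, FF D α D.e2n w2 D.e1 D.e1 = 0 := by
    intro w2 hw2
    rw [Fsw23 D α]
    rw [Fsw34 D α]
    rw [Fsw12 D α]
    rw [Fsw23 D α]
    simp only [neg_neg, neg_eq_zero]
    exact Frep12 D α D.e1 D.e2n w2
  have h2312 : ∀ w2 ∈ D.n1, FF D α D.e2n w2 D.e1 D.e2n = 0 := by
    intro w2 hw2
    rw [Fsw23 D α]
    rw [Fsw34 D α]
    rw [Fsw12 D α]
    simp only [neg_neg, neg_eq_zero]
    exact Frep23 D α D.e1 D.e2n w2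
  have h2313 : ∀ w2 ∈ D.n1, ∀ w4 ∈ D.n1, FF D α D.e2n w2 D.e1 w4 = 0 := by
    intro w2 hw2 w4 hw4
    rw [Fsw23 D α]
    rw [Fsw12 D α]
    simp only [neg_neg, neg_eq_zero]
    exact hL1 w2 hw2 w4 hw4
  have h2321 : ∀ w2 ∈ D.n1, FF D α D.e2n w2 D.e2n D.e1 = 0 := by
    intro w2 hw2
    rw [Fsw23 D α]
    rw [Fsw34 D α]
    rw [Fsw23 D α]
    rw [Fsw12 D α]
    simp only [neg_neg, neg_eq_zero]
    exact Frep23 D α D.e1 D.e2n w2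
  have h2322 : ∀ w2 ∈ D.n1, FF D α D.e2n w2 D.e2n D.e2n = 0 := by
    intro w2 hw2
    rw [Fsw23 D α]
    rw [Fsw34 D α]
    simp only [neg_neg, neg_eq_zero]
    exact Frep12 D α D.e2n D.e2n w2
  have h2323 : ∀ w2 ∈ D.n1, ∀ w4 ∈ D.n1, FF D α D.e2n w2 D.e2n w4 = 0 := by
    intro w2 hw2 w4 hw4
    rw [Fsw23 D α]
    simp only [neg_neg, neg_eq_zero]
    exact Frep12 D α D.e2n w2 w4
  have h2331 : ∀ w2 ∈ D.n1, ∀ w3 ∈ D.n1, FF D α D.e2n w2 w3 D.e1 = 0 := by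
    intro w2 hw2 w3 hw3
    rw [Fsw34 D α]
    rw [Fsw23 D α]
    rw [Fsw12 D α]
    simp only [neg_neg, neg_eq_zero]
    exact hL1 w2 hw2 w3 hw3
  have h2332 : ∀ w2 ∈ D.n1, ∀ w3 ∈ D.n1, FF D α D.e2n w2 w3 D.e2n = 0 := by
    intro w2 hw2 w3 hw3
    rw [Fsw34 D α]
    rw [Fsw23 D α]
    simp only [neg_neg, neg_eq_zero]
    exact Frep12 D α D.e2n w2 w3
  have h2333 : ∀ w2 ∈ D.n1, ∀ w3 ∈ D.n1, ∀ w4 ∈ D.n1, FF D α D.e2n w2 w3 w4 = 0 := by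
    intro w2 hw2 w3 hw3 w4 hw4
    exact Fe2n D α w2 w3 w4 hw2 hw3 hw4
  have h3111 : ∀ w1 ∈ D.n1, FF D α w1 D.e1 D.e1 D.e1 = 0 := by
    intro w1 hw1
    rw [Fsw12 D α]
    rw [Fsw23 D α]
    rw [Fsw34 D α]
    simp only [neg_neg, neg_eq_zero]
    exact Frep12 D α D.e1 D.e1 w1
  have h3112 : ∀ w1 ∈ D.n1, FF D α w1 D.e1 D.e1 D.e2n = 0 := by
    intro w1 hw1
    rw [Fsw12 D α]
    rw [Fsw23 D α]
    rw [Fsw34 D α]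
    simp only [neg_neg, neg_eq_zero]
    exact Frep12 D α D.e1 D.e2n w1
  have h3113 : ∀ w1 ∈ D.n1, ∀ w4 ∈ D.n1, FF D α w1 D.e1 D.e1 w4 = 0 := by
    intro w1 hw1 w4 hw4
    rw [Fsw12 D α]
    rw [Fsw23 D α]
    simp only [neg_neg, neg_eq_zero]
    exact Frep12 D α D.e1 w1 w4
  have h3121 : ∀ w1 ∈ D.n1, FF D α w1 D.e1 D.e2n D.e1 = 0 := by
    intro w1 hw1
    rw [Fsw12 D α]
    rw [Fsw23 D α]
    rw [Fsw34 D α]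
    rw [Fsw23 D α]
    simp only [neg_neg, neg_eq_zero]
    exact Frep12 D α D.e1 D.e2n w1
  have h3122 : ∀ w1 ∈ D.n1, FF D α w1 D.e1 D.e2n D.e2n = 0 := by
    intro w1 hw1
    rw [Fsw12 D α]
    rw [Fsw23 D α]
    rw [Fsw34 D α]
    simp only [neg_neg, neg_eq_zero]
    exact Frep23 D α D.e1 D.e2n w1
  have h3123 : ∀ w1 ∈ D.n1, ∀ w4 ∈ D.n1, FF D α w1 D.e1 D.e2n w4 = 0 := by
    intro w1 hw1 w4 hw4
    rw [Fsw12 D α]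
    rw [Fsw23 D α]
    simp only [neg_neg, neg_eq_zero]
    exact hL1 w1 hw1 w4 hw4
  have h3131 : ∀ w1 ∈ D.n1, ∀ w3 ∈ D.n1, FF D α w1 D.e1 w3 D.e1 = 0 := by
    intro w1 hw1 w3 hw3
    rw [Fsw12 D α]
    rw [Fsw34 D α]
    rw [Fsw23 D α]
    simp only [neg_neg, neg_eq_zero]
    exact Frep12 D α D.e1 w1 w3
  have h3132 : ∀ w1 ∈ D.n1, ∀ w3 ∈ D.n1, FF D α w1 D.e1 w3 D.e2n = 0 := by
    intro w1 hw1 w3 hw3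
    rw [Fsw12 D α]
    rw [Fsw34 D α]
    rw [Fsw23 D α]
    simp only [neg_neg, neg_eq_zero]
    exact hL1 w1 hw1 w3 hw3
  have h3133 : ∀ w1 ∈ D.n1, ∀ w3 ∈ D.n1, ∀ w4 ∈ D.n1, FF D α w1 D.e1 w3 w4 = 0 := by
    intro w1 hw1 w3 hw3 w4 hw4
    rw [Fsw12 D α]
    simp only [neg_neg, neg_eq_zero]
    exact hL2 w1 hw1 w3 hw3 w4 hw4
  have h3211 : ∀ w1 ∈ D.n1, FF D α w1 D.e2n D.e1 D.e1 = 0 := by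
    intro w1 hw1
    rw [Fsw12 D α]
    rw [Fsw23 D α]
    rw [Fsw34 D α]
    rw [Fsw12 D α]
    rw [Fsw23 D α]
    simp only [neg_neg, neg_eq_zero]
    exact Frep12 D α D.e1 D.e2n w1
  have h3212 : ∀ w1 ∈ D.n1, FF D α w1 D.e2n D.e1 D.e2n = 0 := by
    intro w1 hw1
    rw [Fsw12 D α]
    rw [Fsw23 D α]
    rw [Fsw34 D α]
    rw [Fsw12 D α]
    simp only [neg_neg, neg_eq_zero]
    exact Frep23 D α D.e1 D.e2n w1
  have h3213 : ∀ w1 ∈ D.n1, ∀ w4 ∈ D.n1, FF D α w1 D.e2n D.e1 w4 = 0 := by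
    intro w1 hw1 w4 hw4
    rw [Fsw12 D α]
    rw [Fsw23 D α]
    rw [Fsw12 D α]
    simp only [neg_neg, neg_eq_zero]
    exact hL1 w1 hw1 w4 hw4
  have h3221 : ∀ w1 ∈ D.n1, FF D α w1 D.e2n D.e2n D.e1 = 0 := by
    intro w1 hw1
    rw [Fsw12 D α]
    rw [Fsw23 D α]
    rw [Fsw34 D α]
    rw [Fsw23 D α]
    rw [Fsw12 D α]
    simp only [neg_neg, neg_eq_zero]
    exact Frep23 D α D.e1 D.e2n w1
  have h3222 : ∀ w1 ∈ D.n1, FF D α w1 D.e2n D.e2n D.e2n = 0 := by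
    intro w1 hw1
    rw [Fsw12 D α]
    rw [Fsw23 D α]
    rw [Fsw34 D α]
    simp only [neg_neg, neg_eq_zero]
    exact Frep12 D α D.e2n D.e2n w1
  have h3223 : ∀ w1 ∈ D.n1, ∀ w4 ∈ D.n1, FF D α w1 D.e2n D.e2n w4 = 0 := by
    intro w1 hw1 w4 hw4
    rw [Fsw12 D α]
    rw [Fsw23 D α]
    simp only [neg_neg, neg_eq_zero]
    exact Frep12 D α D.e2n w1 w4
  have h3231 : ∀ w1 ∈ D.n1, ∀ w3 ∈ D.n1, FF D α w1 D.e2n w3 D.e1 = 0 := by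
    intro w1 hw1 w3 hw3
    rw [Fsw12 D α]
    rw [Fsw34 D α]
    rw [Fsw23 D α]
    rw [Fsw12 D α]
    simp only [neg_neg, neg_eq_zero]
    exact hL1 w1 hw1 w3 hw3
  have h3232 : ∀ w1 ∈ D.n1, ∀ w3 ∈ D.n1, FF D α w1 D.e2n w3 D.e2n = 0 := by
    intro w1 hw1 w3 hw3
    rw [Fsw12 D α]
    rw [Fsw34 D α]
    rw [Fsw23 D α]
    simp only [neg_neg, neg_eq_zero]
    exact Frep12 D α D.e2n w1 w3
  have h3233 : ∀ w1 ∈ D.n1, ∀ w3 ∈ D.n1, ∀ w4 ∈ D.n1, FF D α w1 D.e2n w3 w4 = 0 := by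
    intro w1 hw1 w3 hw3 w4 hw4
    rw [Fsw12 D α]
    simp only [neg_neg, neg_eq_zero]
    exact Fe2n D α w1 w3 w4 hw1 hw3 hw4
  have h3311 : ∀ w1 ∈ D.n1, ∀ w2 ∈ D.n1, FF D α w1 w2 D.e1 D.e1 = 0 := by
    intro w1 hw1 w2 hw2
    rw [Fsw23 D α]
    rw [Fsw34 D α]
    rw [Fsw12 D α]
    rw [Fsw23 D α]
    simp only [neg_neg, neg_eq_zero]
    exact Frep12 D α D.e1 w1 w2
  have h3312 : ∀ w1 ∈ D.n1, ∀ w2 ∈ D.n1, FF D α w1 w2 D.e1 D.e2n = 0 := by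
    intro w1 hw1 w2 hw2
    rw [Fsw23 D α]
    rw [Fsw34 D α]
    rw [Fsw12 D α]
    rw [Fsw23 D α]
    simp only [neg_neg, neg_eq_zero]
    exact hL1 w1 hw1 w2 hw2
  have h3313 : ∀ w1 ∈ D.n1, ∀ w2 ∈ D.n1, ∀ w4 ∈ D.n1, FF D α w1 w2 D.e1 w4 = 0 := by
    intro w1 hw1 w2 hw2 w4 hw4
    rw [Fsw23 D α]
    rw [Fsw12 D α]
    simp only [neg_neg, neg_eq_zero]
    exact hL2 w1 hw1 w2 hw2 w4 hw4
  have h3321 : ∀ w1 ∈ D.n1, ∀ w2 ∈ D.n1, FF D α w1 w2 D.e2n D.e1 = 0 := by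
    intro w1 hw1 w2 hw2
    rw [Fsw23 D α]
    rw [Fsw34 D α]
    rw [Fsw12 D α]
    rw [Fsw23 D α]
    rw [Fsw12 D α]
    simp only [neg_neg, neg_eq_zero]
    exact hL1 w1 hw1 w2 hw2
  have h3322 : ∀ w1 ∈ D.n1, ∀ w2 ∈ D.n1, FF D α w1 w2 D.e2n D.e2n = 0 := by
    intro w1 hw1 w2 hw2
    rw [Fsw23 D α]
    rw [Fsw34 D α]
    rw [Fsw12 D α]
    rw [Fsw23 D α]
    simp only [neg_neg, neg_eq_zero]
    exact Frep12 D α D.e2n w1 w2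
  have h3323 : ∀ w1 ∈ D.n1, ∀ w2 ∈ D.n1, ∀ w4 ∈ D.n1, FF D α w1 w2 D.e2n w4 = 0 := by
    intro w1 hw1 w2 hw2 w4 hw4
    rw [Fsw23 D α]
    rw [Fsw12 D α]
    simp only [neg_neg, neg_eq_zero]
    exact Fe2n D α w1 w2 w4 hw1 hw2 hw4
  have h3331 : ∀ w1 ∈ D.n1, ∀ w2 ∈ D.n1, ∀ w3 ∈ D.n1, FF D α w1 w2 w3 D.e1 = 0 := by
    intro w1 hw1 w2 hw2 w3 hw3
    rw [Fsw34 D α]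
    rw [Fsw23 D α]
    rw [Fsw12 D α]
    simp only [neg_neg, neg_eq_zero]
    exact hL2 w1 hw1 w2 hw2 w3 hw3
  have h3332 : ∀ w1 ∈ D.n1, ∀ w2 ∈ D.n1, ∀ w3 ∈ D.n1, FF D α w1 w2 w3 D.e2n = 0 := by
    intro w1 hw1 w2 hw2 w3 hw3
    rw [Fsw34 D α]
    rw [Fsw23 D α]
    rw [Fsw12 D α]
    simp only [neg_neg, neg_eq_zero]
    exact Fe2n D α w1 w2 w3 hw1 hw2 hw3
  have h3333 : ∀ w1 ∈ D.n1, ∀ w2 ∈ D.n1, ∀ w3 ∈ D.n1, ∀ w4 ∈ D.n1, FF D α w1 w2 w3 w4 = 0 := by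
    intro w1 hw1 w2 hw2 w3 hw3 w4 hw4
    exact Fn1 D α w1 w2 w3 w4 hw1 hw2 hw3 hw4
  have g111 : ∀ Z : L, FF D α D.e1 D.e1 D.e1 Z = 0 := by
    intro Z
    exact red D (fun Z' => FF D α D.e1 D.e1 D.e1 Z') (fun U V => Fadd4 D α D.e1 D.e1 D.e1 U V)
      (fun c U => Fsmul4 D α c D.e1 D.e1 D.e1 U) (h1111)
      (h1112) (fun w hw => h1113 w hw) Z
  have g112 : ∀ Z : L, FF D α D.e1 D.e1 D.e2n Z = 0 := by
    intro Z
    exact red D (fun Z' => FF D α D.e1 D.e1 D.e2n Z') (fun U V => Fadd4 D α D.e1 D.e1 D.e2n U V)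
      (fun c U => Fsmul4 D α c D.e1 D.e1 D.e2n U) (h1121)
      (h1122) (fun w hw => h1123 w hw) Z
  have g113 : ∀ w3 ∈ D.n1, ∀ Z : L, FF D α D.e1 D.e1 w3 Z = 0 := by
    intro w3 hw3 Z
    exact red D (fun Z' => FF D α D.e1 D.e1 w3 Z') (fun U V => Fadd4 D α D.e1 D.e1 w3 U V)
      (fun c U => Fsmul4 D α c D.e1 D.e1 w3 U) (h1131 w3 hw3)
      (h1132 w3 hw3) (fun w hw => h1133 w3 hw3 w hw) Z
  have g121 : ∀ Z : L, FF D α D.e1 D.e2n D.e1 Z = 0 := by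
    intro Z
    exact red D (fun Z' => FF D α D.e1 D.e2n D.e1 Z') (fun U V => Fadd4 D α D.e1 D.e2n D.e1 U V)
      (fun c U => Fsmul4 D α c D.e1 D.e2n D.e1 U) (h1211)
      (h1212) (fun w hw => h1213 w hw) Z
  have g122 : ∀ Z : L, FF D α D.e1 D.e2n D.e2n Z = 0 := by
    intro Z
    exact red D (fun Z' => FF D α D.e1 D.e2n D.e2n Z') (fun U V => Fadd4 D α D.e1 D.e2n D.e2n U V)
      (fun c U => Fsmul4 D α c D.e1 D.e2n D.e2n U) (h1221)
      (h1222) (fun w hw => h1223 w hw) Z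
  have g123 : ∀ w3 ∈ D.n1, ∀ Z : L, FF D α D.e1 D.e2n w3 Z = 0 := by
    intro w3 hw3 Z
    exact red D (fun Z' => FF D α D.e1 D.e2n w3 Z') (fun U V => Fadd4 D α D.e1 D.e2n w3 U V)
      (fun c U => Fsmul4 D α c D.e1 D.e2n w3 U) (h1231 w3 hw3)
      (h1232 w3 hw3) (fun w hw => h1233 w3 hw3 w hw) Z
  have g131 : ∀ w2 ∈ D.n1, ∀ Z : L, FF D α D.e1 w2 D.e1 Z = 0 := by
    intro w2 hw2 Z
    exact red D (fun Z' => FF D α D.e1 w2 D.e1 Z') (fun U V => Fadd4 D α D.e1 w2 D.e1 U V)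
      (fun c U => Fsmul4 D α c D.e1 w2 D.e1 U) (h1311 w2 hw2)
      (h1312 w2 hw2) (fun w hw => h1313 w2 hw2 w hw) Z
  have g132 : ∀ w2 ∈ D.n1, ∀ Z : L, FF D α D.e1 w2 D.e2n Z = 0 := by
    intro w2 hw2 Z
    exact red D (fun Z' => FF D α D.e1 w2 D.e2n Z') (fun U V => Fadd4 D α D.e1 w2 D.e2n U V)
      (fun c U => Fsmul4 D α c D.e1 w2 D.e2n U) (h1321 w2 hw2)
      (h1322 w2 hw2) (fun w hw => h1323 w2 hw2 w hw) Z
  have g133 : ∀ w2 ∈ D.n1, ∀ w3 ∈ D.n1, ∀ Z : L, FF D α D.e1 w2 w3 Z = 0 := by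
    intro w2 hw2 w3 hw3 Z
    exact red D (fun Z' => FF D α D.e1 w2 w3 Z') (fun U V => Fadd4 D α D.e1 w2 w3 U V)
      (fun c U => Fsmul4 D α c D.e1 w2 w3 U) (h1331 w2 hw2 w3 hw3)
      (h1332 w2 hw2 w3 hw3) (fun w hw => h1333 w2 hw2 w3 hw3 w hw) Z
  have g211 : ∀ Z : L, FF D α D.e2n D.e1 D.e1 Z = 0 := by
    intro Z
    exact red D (fun Z' => FF D α D.e2n D.e1 D.e1 Z') (fun U V => Fadd4 D α D.e2n D.e1 D.e1 U V)
      (fun c U => Fsmul4 D α c D.e2n D.e1 D.e1 U) (h2111)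
      (h2112) (fun w hw => h2113 w hw) Z
  have g212 : ∀ Z : L, FF D α D.e2n D.e1 D.e2n Z = 0 := by
    intro Z
    exact red D (fun Z' => FF D α D.e2n D.e1 D.e2n Z') (fun U V => Fadd4 D α D.e2n D.e1 D.e2n U V)
      (fun c U => Fsmul4 D α c D.e2n D.e1 D.e2n U) (h2121)
      (h2122) (fun w hw => h2123 w hw) Z
  have g213 : ∀ w3 ∈ D.n1, ∀ Z : L, FF D α D.e2n D.e1 w3 Z = 0 := by
    intro w3 hw3 Z
    exact red D (fun Z' => FF D α D.e2n D.e1 w3 Z') (fun U V => Fadd4 D α D.e2n D.e1 w3 U V)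
      (fun c U => Fsmul4 D α c D.e2n D.e1 w3 U) (h2131 w3 hw3)
      (h2132 w3 hw3) (fun w hw => h2133 w3 hw3 w hw) Z
  have g221 : ∀ Z : L, FF D α D.e2n D.e2n D.e1 Z = 0 := by
    intro Z
    exact red D (fun Z' => FF D α D.e2n D.e2n D.e1 Z') (fun U V => Fadd4 D α D.e2n D.e2n D.e1 U V)
      (fun c U => Fsmul4 D α c D.e2n D.e2n D.e1 U) (h2211)
      (h2212) (fun w hw => h2213 w hw) Z
  have g222 : ∀ Z : L, FF D α D.e2n D.e2n D.e2n Z = 0 := by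
    intro Z
    exact red D (fun Z' => FF D α D.e2n D.e2n D.e2n Z') (fun U V => Fadd4 D α D.e2n D.e2n D.e2n U V)
      (fun c U => Fsmul4 D α c D.e2n D.e2n D.e2n U) (h2221)
      (h2222) (fun w hw => h2223 w hw) Z
  have g223 : ∀ w3 ∈ D.n1, ∀ Z : L, FF D α D.e2n D.e2n w3 Z = 0 := by
    intro w3 hw3 Z
    exact red D (fun Z' => FF D α D.e2n D.e2n w3 Z') (fun U V => Fadd4 D α D.e2n D.e2n w3 U V)
      (fun c U => Fsmul4 D α c D.e2n D.e2n w3 U) (h2231 w3 hw3)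
      (h2232 w3 hw3) (fun w hw => h2233 w3 hw3 w hw) Z
  have g231 : ∀ w2 ∈ D.n1, ∀ Z : L, FF D α D.e2n w2 D.e1 Z = 0 := by
    intro w2 hw2 Z
    exact red D (fun Z' => FF D α D.e2n w2 D.e1 Z') (fun U V => Fadd4 D α D.e2n w2 D.e1 U V)
      (fun c U => Fsmul4 D α c D.e2n w2 D.e1 U) (h2311 w2 hw2)
      (h2312 w2 hw2) (fun w hw => h2313 w2 hw2 w hw) Z
  have g232 : ∀ w2 ∈ D.n1, ∀ Z : L, FF D α D.e2n w2 D.e2n Z = 0 := by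
    intro w2 hw2 Z
    exact red D (fun Z' => FF D α D.e2n w2 D.e2n Z') (fun U V => Fadd4 D α D.e2n w2 D.e2n U V)
      (fun c U => Fsmul4 D α c D.e2n w2 D.e2n U) (h2321 w2 hw2)
      (h2322 w2 hw2) (fun w hw => h2323 w2 hw2 w hw) Z
  have g233 : ∀ w2 ∈ D.n1, ∀ w3 ∈ D.n1, ∀ Z : L, FF D α D.e2n w2 w3 Z = 0 := by
    intro w2 hw2 w3 hw3 Z
    exact red D (fun Z' => FF D α D.e2n w2 w3 Z') (fun U V => Fadd4 D α D.e2n w2 w3 U V)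
      (fun c U => Fsmul4 D α c D.e2n w2 w3 U) (h2331 w2 hw2 w3 hw3)
      (h2332 w2 hw2 w3 hw3) (fun w hw => h2333 w2 hw2 w3 hw3 w hw) Z
  have g311 : ∀ w1 ∈ D.n1, ∀ Z : L, FF D α w1 D.e1 D.e1 Z = 0 := by
    intro w1 hw1 Z
    exact red D (fun Z' => FF D α w1 D.e1 D.e1 Z') (fun U V => Fadd4 D α w1 D.e1 D.e1 U V)
      (fun c U => Fsmul4 D α c w1 D.e1 D.e1 U) (h3111 w1 hw1)
      (h3112 w1 hw1) (fun w hw => h3113 w1 hw1 w hw) Z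
  have g312 : ∀ w1 ∈ D.n1, ∀ Z : L, FF D α w1 D.e1 D.e2n Z = 0 := by
    intro w1 hw1 Z
    exact red D (fun Z' => FF D α w1 D.e1 D.e2n Z') (fun U V => Fadd4 D α w1 D.e1 D.e2n U V)
      (fun c U => Fsmul4 D α c w1 D.e1 D.e2n U) (h3121 w1 hw1)
      (h3122 w1 hw1) (fun w hw => h3123 w1 hw1 w hw) Z
  have g313 : ∀ w1 ∈ D.n1, ∀ w3 ∈ D.n1, ∀ Z : L, FF D α w1 D.e1 w3 Z = 0 := by
    intro w1 hw1 w3 hw3 Z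
    exact red D (fun Z' => FF D α w1 D.e1 w3 Z') (fun U V => Fadd4 D α w1 D.e1 w3 U V)
      (fun c U => Fsmul4 D α c w1 D.e1 w3 U) (h3131 w1 hw1 w3 hw3)
      (h3132 w1 hw1 w3 hw3) (fun w hw => h3133 w1 hw1 w3 hw3 w hw) Z
  have g321 : ∀ w1 ∈ D.n1, ∀ Z : L, FF D α w1 D.e2n D.e1 Z = 0 := by
    intro w1 hw1 Z
    exact red D (fun Z' => FF D α w1 D.e2n D.e1 Z') (fun U V => Fadd4 D α w1 D.e2n D.e1 U V)
      (fun c U => Fsmul4 D α c w1 D.e2n D.e1 U) (h3211 w1 hw1)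
      (h3212 w1 hw1) (fun w hw => h3213 w1 hw1 w hw) Z
  have g322 : ∀ w1 ∈ D.n1, ∀ Z : L, FF D α w1 D.e2n D.e2n Z = 0 := by
    intro w1 hw1 Z
    exact red D (fun Z' => FF D α w1 D.e2n D.e2n Z') (fun U V => Fadd4 D α w1 D.e2n D.e2n U V)
      (fun c U => Fsmul4 D α c w1 D.e2n D.e2n U) (h3221 w1 hw1)
      (h3222 w1 hw1) (fun w hw => h3223 w1 hw1 w hw) Z
  have g323 : ∀ w1 ∈ D.n1, ∀ w3 ∈ D.n1, ∀ Z : L, FF D α w1 D.e2n w3 Z = 0 := by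
    intro w1 hw1 w3 hw3 Z
    exact red D (fun Z' => FF D α w1 D.e2n w3 Z') (fun U V => Fadd4 D α w1 D.e2n w3 U V)
      (fun c U => Fsmul4 D α c w1 D.e2n w3 U) (h3231 w1 hw1 w3 hw3)
      (h3232 w1 hw1 w3 hw3) (fun w hw => h3233 w1 hw1 w3 hw3 w hw) Z
  have g331 : ∀ w1 ∈ D.n1, ∀ w2 ∈ D.n1, ∀ Z : L, FF D α w1 w2 D.e1 Z = 0 := by
    intro w1 hw1 w2 hw2 Z
    exact red D (fun Z' => FF D α w1 w2 D.e1 Z') (fun U V => Fadd4 D α w1 w2 D.e1 U V)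
      (fun c U => Fsmul4 D α c w1 w2 D.e1 U) (h3311 w1 hw1 w2 hw2)
      (h3312 w1 hw1 w2 hw2) (fun w hw => h3313 w1 hw1 w2 hw2 w hw) Z
  have g332 : ∀ w1 ∈ D.n1, ∀ w2 ∈ D.n1, ∀ Z : L, FF D α w1 w2 D.e2n Z = 0 := by
    intro w1 hw1 w2 hw2 Z
    exact red D (fun Z' => FF D α w1 w2 D.e2n Z') (fun U V => Fadd4 D α w1 w2 D.e2n U V)
      (fun c U => Fsmul4 D α c w1 w2 D.e2n U) (h3321 w1 hw1 w2 hw2)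
      (h3322 w1 hw1 w2 hw2) (fun w hw => h3323 w1 hw1 w2 hw2 w hw) Z
  have g333 : ∀ w1 ∈ D.n1, ∀ w2 ∈ D.n1, ∀ w3 ∈ D.n1, ∀ Z : L, FF D α w1 w2 w3 Z = 0 := by
    intro w1 hw1 w2 hw2 w3 hw3 Z
    exact red D (fun Z' => FF D α w1 w2 w3 Z') (fun U V => Fadd4 D α w1 w2 w3 U V)
      (fun c U => Fsmul4 D α c w1 w2 w3 U) (h3331 w1 hw1 w2 hw2 w3 hw3)
      (h3332 w1 hw1 w2 hw2 w3 hw3) (fun w hw => h3333 w1 hw1 w2 hw2 w3 hw3 w hw) Z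
  have g11 : ∀ Y Z : L, FF D α D.e1 D.e1 Y Z = 0 := by
    intro Y Z
    exact red D (fun Y' => FF D α D.e1 D.e1 Y' Z) (fun U V => Fadd3 D α D.e1 D.e1 U V Z)
      (fun c U => Fsmul3 D α c D.e1 D.e1 U Z) (g111 Z)
      (g112 Z) (fun w hw => g113 w hw Z) Y
  have g12 : ∀ Y Z : L, FF D α D.e1 D.e2n Y Z = 0 := by
    intro Y Z
    exact red D (fun Y' => FF D α D.e1 D.e2n Y' Z) (fun U V => Fadd3 D α D.e1 D.e2n U V Z)
      (fun c U => Fsmul3 D α c D.e1 D.e2n U Z) (g121 Z)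
      (g122 Z) (fun w hw => g123 w hw Z) Y
  have g13 : ∀ w2 ∈ D.n1, ∀ Y Z : L, FF D α D.e1 w2 Y Z = 0 := by
    intro w2 hw2 Y Z
    exact red D (fun Y' => FF D α D.e1 w2 Y' Z) (fun U V => Fadd3 D α D.e1 w2 U V Z)
      (fun c U => Fsmul3 D α c D.e1 w2 U Z) (g131 w2 hw2 Z)
      (g132 w2 hw2 Z) (fun w hw => g133 w2 hw2 w hw Z) Y
  have g21 : ∀ Y Z : L, FF D α D.e2n D.e1 Y Z = 0 := by
    intro Y Z
    exact red D (fun Y' => FF D α D.e2n D.e1 Y' Z) (fun U V => Fadd3 D α D.e2n D.e1 U V Z)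
      (fun c U => Fsmul3 D α c D.e2n D.e1 U Z) (g211 Z)
      (g212 Z) (fun w hw => g213 w hw Z) Y
  have g22 : ∀ Y Z : L, FF D α D.e2n D.e2n Y Z = 0 := by
    intro Y Z
    exact red D (fun Y' => FF D α D.e2n D.e2n Y' Z) (fun U V => Fadd3 D α D.e2n D.e2n U V Z)
      (fun c U => Fsmul3 D α c D.e2n D.e2n U Z) (g221 Z)
      (g222 Z) (fun w hw => g223 w hw Z) Y
  have g23 : ∀ w2 ∈ D.n1, ∀ Y Z : L, FF D α D.e2n w2 Y Z = 0 := by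
    intro w2 hw2 Y Z
    exact red D (fun Y' => FF D α D.e2n w2 Y' Z) (fun U V => Fadd3 D α D.e2n w2 U V Z)
      (fun c U => Fsmul3 D α c D.e2n w2 U Z) (g231 w2 hw2 Z)
      (g232 w2 hw2 Z) (fun w hw => g233 w2 hw2 w hw Z) Y
  have g31 : ∀ w1 ∈ D.n1, ∀ Y Z : L, FF D α w1 D.e1 Y Z = 0 := by
    intro w1 hw1 Y Z
    exact red D (fun Y' => FF D α w1 D.e1 Y' Z) (fun U V => Fadd3 D α w1 D.e1 U V Z)
      (fun c U => Fsmul3 D α c w1 D.e1 U Z) (g311 w1 hw1 Z)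
      (g312 w1 hw1 Z) (fun w hw => g313 w1 hw1 w hw Z) Y
  have g32 : ∀ w1 ∈ D.n1, ∀ Y Z : L, FF D α w1 D.e2n Y Z = 0 := by
    intro w1 hw1 Y Z
    exact red D (fun Y' => FF D α w1 D.e2n Y' Z) (fun U V => Fadd3 D α w1 D.e2n U V Z)
      (fun c U => Fsmul3 D α c w1 D.e2n U Z) (g321 w1 hw1 Z)
      (g322 w1 hw1 Z) (fun w hw => g323 w1 hw1 w hw Z) Y
  have g33 : ∀ w1 ∈ D.n1, ∀ w2 ∈ D.n1, ∀ Y Z : L, FF D α w1 w2 Y Z = 0 := by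
    intro w1 hw1 w2 hw2 Y Z
    exact red D (fun Y' => FF D α w1 w2 Y' Z) (fun U V => Fadd3 D α w1 w2 U V Z)
      (fun c U => Fsmul3 D α c w1 w2 U Z) (g331 w1 hw1 w2 hw2 Z)
      (g332 w1 hw1 w2 hw2 Z) (fun w hw => g333 w1 hw1 w2 hw2 w hw Z) Y
  have g1 : ∀ X Y Z : L, FF D α D.e1 X Y Z = 0 := by
    intro X Y Z
    exact red D (fun X' => FF D α D.e1 X' Y Z) (fun U V => Fadd2 D α D.e1 U V Y Z)
      (fun c U => Fsmul2 D α c D.e1 U Y Z) (g11 Y Z)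
      (g12 Y Z) (fun w hw => g13 w hw Y Z) X
  have g2 : ∀ X Y Z : L, FF D α D.e2n X Y Z = 0 := by
    intro X Y Z
    exact red D (fun X' => FF D α D.e2n X' Y Z) (fun U V => Fadd2 D α D.e2n U V Y Z)
      (fun c U => Fsmul2 D α c D.e2n U Y Z) (g21 Y Z)
      (g22 Y Z) (fun w hw => g23 w hw Y Z) X
  have g3 : ∀ w1 ∈ D.n1, ∀ X Y Z : L, FF D α w1 X Y Z = 0 := by
    intro w1 hw1 X Y Z
    exact red D (fun X' => FF D α w1 X' Y Z) (fun U V => Fadd2 D α w1 U V Y Z)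
      (fun c U => Fsmul2 D α c w1 U Y Z) (g31 w1 hw1 Y Z)
      (g32 w1 hw1 Y Z) (fun w hw => g33 w1 hw1 w hw Y Z) X
  intro W X Y Z
  exact red D (fun W' => FF D α W' X Y Z) (fun U V => Fadd1 D α U V X Y Z)
    (fun c U => Fsmul1 D α c U X Y Z) (g1 X Y Z)
    (g2 X Y Z) (fun w hw => g3 w hw X Y Z) W

end AABH

end Aux6


open AABH

open AlmostAbelianHermitian in
/-- A Hermitian almost abelian Lie algebra `𝔤(a,v,A)` is
LCSKT iff there is a nonzero closed 1-form `α` satisfying conditions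
(c1), (c2), (c3). -/
theorem almostAbelian_lcskt_iff
    (L : Type*) [LieRing L] [LieAlgebra ℝ L] (D : AlmostAbelianHermitian L) :
    IsLCSKT D.J D.g ↔
      ∃ α : Module.Dual ℝ L, α ≠ 0 ∧ IsClosedOneForm α ∧
        -- (c1)
        (D.a * α D.e1 + α D.v = 0) ∧
        (∀ x ∈ D.n1, α (D.A x) = 0) ∧
        -- (c2)
        (∀ x ∈ D.n1, ∀ y ∈ D.n1, ∀ z ∈ D.n1,
          α x * D.g (D.SA (D.J y)) z - α y * D.g (D.SA (D.J x)) z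
            + α z * D.g (D.SA (D.J y)) x = 0) ∧
        -- (c3)
        (∀ y ∈ D.n1, ∀ z ∈ D.n1,
          D.g (D.SM (D.a + α D.e2n) (D.J y)) z
            = (1/2) * (D.g D.v y * α z - D.g D.v z * α y)) := by
  constructor
  · rintro ⟨α, hα0, hcl, hLC⟩
    have hFF : ∀ W X Y Z : L, FF D α W X Y Z = 0 := by
      intro W X Y Z
      simp only [FF]
      rw [hLC W X Y Z]
      ring
    have hC : ∀ x ∈ D.n1, ∀ y ∈ D.n1, ∀ z ∈ D.n1,
        α x * bet D y z - α y * bet D x z + α z * bet D x y = 0 := by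
      intro x hx y hy z hz
      have h := hFF D.e1 x y z
      rw [Fval1 D α x y z hx hy hz] at h
      linarith
    refine ⟨α, hα0, hcl, ?_, ?_, ?_, ?_⟩
    · have h := hcl D.e2n D.e1
      rw [D.hbra1] at h
      simpa using h
    · intro x hx
      have h := hcl D.e2n x
      rwa [D.hbra2 x hx] at h
    · exact c2_of_Cw D α hcl hC
    · intro y hy z hz
      have h := hFF D.e1 D.e2n y z
      rw [Fval2 D α y z hy hz] at h
      have h2 := twoSM D (D.a + α D.e2n) y z hy hz
      linear_combination (1/2) * h2 - (1/2) * h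
  · rintro ⟨α, hα0, hcl, hc1a, hc1b, hc2, hc3⟩
    refine ⟨α, hα0, hcl, ?_⟩
    have hC := Cw_of_c2 D α hc2
    have hL2 : ∀ x ∈ D.n1, ∀ y ∈ D.n1, ∀ z ∈ D.n1, FF D α D.e1 x y z = 0 := by
      intro x hx y hy z hz
      rw [Fval1 D α x y z hx hy hz]
      have h := hC x hx y hy z hz
      linarith
    have hL1 : ∀ y ∈ D.n1, ∀ z ∈ D.n1, FF D α D.e1 D.e2n y z = 0 := by
      intro y hy z hz
      rw [Fval2 D α y z hy hz]
      have h2 := twoSM D (D.a + α D.e2n) y z hy hz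
      have h3 := hc3 y hy z hz
      linear_combination h2 - 2 * h3
    have hFF := master D α hL1 hL2
    intro W X Y Z
    have h := hFF W X Y Z
    simp only [FF] at h
    linarith
end
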